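/- arXiv:0906.4875 — 2 statements merged into one kernel-verified Lean document; each statement's English description precedes it below -/
import Mathlib

section
/- Let X be a finite set with |X| ≥ 4 and let S be a collection of subsets of X. If there exists a fixed element x0 ∈ X such that every 4-element subset of X containing x0 belongs to Q_S, then S is phylogenetically decisive for X. -/
/-- A binary phylogenetic `X`-tree: a finite tree (connected acyclic simple graph)
whose degree-1 vertices (leaves) are in bijection with the label set `X`, and all of
whose non-leaf vertices have degree 3. -/
structure PhyloTree {α : Type} (X : Finset α) : Type 1 where
  V : Type
  fintypeV : Fintype V
  G : SimpleGraph V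
  connected : G.Connected
  acyclic : G.IsAcyclic
  leaf : α → V
  leaf_inj : ∀ x ∈ X, ∀ y ∈ X, leaf x = leaf y → x = y
  leaf_degree : ∀ x ∈ X, (G.neighborSet (leaf x)).ncard = 1
  degree_one_is_leaf : ∀ v : V, (G.neighborSet v).ncard = 1 → ∃ x ∈ X, leaf x = v
  internal_degree : ∀ v : V, (∀ x ∈ X, leaf x ≠ v) → (G.neighborSet v).ncard = 3

namespace PhyloTree

variable {α : Type} {X : Finset α}

/-- `T` resolves the quartet `{a,b,c,d}` as `ab|cd`: the (unique) path from the leaf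
labeled `a` to the leaf labeled `b` is vertex-disjoint from the path from the leaf
labeled `c` to the leaf labeled `d`. -/
def ResolvesAs (T : PhyloTree X) (a b c d : α) : Prop :=
  ∃ (p : T.G.Walk (T.leaf a) (T.leaf b)) (q : T.G.Walk (T.leaf c) (T.leaf d)),
    p.IsPath ∧ q.IsPath ∧ ∀ v ∈ p.support, v ∉ q.support

/-- Two binary phylogenetic `X`-trees are label-isomorphic. -/
def LabelIso (T T' : PhyloTree X) : Prop :=
  ∃ φ : T.G ≃g T'.G, ∀ x ∈ X, φ (T.leaf x) = T'.leaf x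

/-- `T` and `T'` resolve the 4-element subset `q` identically. -/
def ResolveIdentically [DecidableEq α] (T T' : PhyloTree X) (q : Finset α) : Prop :=
  ∀ a b c d : α, ({a, b, c, d} : Finset α) = q →
    (T.ResolvesAs a b c d ↔ T'.ResolvesAs a b c d)

/-- A cherry: a pair of leaves adjacent to the same vertex. -/
def IsCherry (T : PhyloTree X) (a b : α) : Prop :=
  ∃ v : T.V, T.G.Adj (T.leaf a) v ∧ T.G.Adj (T.leaf b) v

end PhyloTree

/-- `Q_S`: the set of all 4-element subsets contained in at least one member of `S`. -/
def QSet {α : Type} (S : Set (Finset α)) : Set (Finset α) :=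
  {q | q.card = 4 ∧ ∃ Y ∈ S, q ⊆ Y}

/-- `S` is phylogenetically decisive for `X`: any two binary phylogenetic `X`-trees
that resolve every quartet in `Q_S` identically are label-isomorphic. -/
def PhyloDecisive {α : Type} [DecidableEq α] (X : Finset α) (S : Set (Finset α)) : Prop :=
  ∀ T T' : PhyloTree X,
    (∀ q ∈ QSet S, PhyloTree.ResolveIdentically T T' q) → PhyloTree.LabelIso T T'

/-- `S` satisfies the four-way partition property for `X`. -/
def FourWayPartitionProperty {α : Type} [DecidableEq α] (X : Finset α)
    (S : Set (Finset α)) : Prop :=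
  ∀ A1 A2 A3 A4 : Finset α,
    A1.Nonempty → A2.Nonempty → A3.Nonempty → A4.Nonempty →
    Disjoint A1 A2 → Disjoint A1 A3 → Disjoint A1 A4 →
    Disjoint A2 A3 → Disjoint A2 A4 → Disjoint A3 A4 →
    A1 ∪ A2 ∪ A3 ∪ A4 = X →
    ∃ a1 ∈ A1, ∃ a2 ∈ A2, ∃ a3 ∈ A3, ∃ a4 ∈ A4,
      ({a1, a2, a3, a4} : Finset α) ∈ QSet S

/-- `S` is decisive for the particular tree `T`. -/
def DecisiveFor {α : Type} [DecidableEq α] {X : Finset α} (S : Set (Finset α))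
    (T : PhyloTree X) : Prop :=
  ∀ T' : PhyloTree X,
    (∀ q ∈ QSet S, PhyloTree.ResolveIdentically T T' q) → PhyloTree.LabelIso T T'

/-!
In a tree the median of three vertices is the unique vertex lying on all three connecting
paths, and for distinct leaves `ab|cd` holds exactly when `med a b c = med a b d`. If a fifth
leaf `e` is added, `ab|cd` holds iff either `ae|cd` and `be|cd`, or `ab|ce` and `ab|de`:
comparing the positions of `med a b e` and `med a b c` on the path from `a` to `b` gives one
of the two alternatives, and since a quartet has exactly one resolution, each alternative
excludes the other two resolutions of `{a, b, c, d}`. Taking `e = x0`, trees that agree on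
the quartets through `x0` agree on all quartets.

Two binary trees with the same quartets are label-isomorphic. Every vertex is the median of
three leaves, and the quartets decide when two triples of leaves have the same median (pass
from one triple to the other by replacing one leaf at a time inside its branch at the
median), so `med a b c ↦ med' a b c` is a well-defined bijection. It preserves edges: if the
images of adjacent vertices were not adjacent, a vertex strictly between them would carry a
leaf `s` in its third branch, and `s` would give a quartet resolved differently in the two
trees.
-/
namespace PhyloTree

open SimpleGraph

variable {α : Type} {X : Finset α}

instance (T : PhyloTree X) : Fintype T.V := T.fintypeV

noncomputable instance (T : PhyloTree X) : DecidableEq T.V := Classical.decEq _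

section Metric

variable (T : PhyloTree X)

lemma isTree : T.G.IsTree := ⟨T.connected, T.acyclic⟩

/-- `m` lies on the path from `u` to `v`. -/
def Btw (u m v : T.V) : Prop := T.G.dist u m + T.G.dist m v = T.G.dist u v

variable {T}

lemma dist_triangle (u m v : T.V) : T.G.dist u v ≤ T.G.dist u m + T.G.dist m v :=
  T.connected.dist_triangle

lemma eq_of_isPath {u v : T.V} {p q : T.G.Walk u v} (hp : p.IsPath) (hq : q.IsPath) : p = q :=
  (T.isTree.existsUnique_path u v).unique hp hq

lemma length_eq_dist_of_isPath {u v : T.V} {p : T.G.Walk u v} (hp : p.IsPath) :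
    p.length = T.G.dist u v := by
  obtain ⟨q, hq, hlen⟩ := T.connected.exists_path_of_dist u v
  rw [eq_of_isPath hp hq, hlen]

lemma mem_support_iff_btw {u m v : T.V} {p : T.G.Walk u v} (hp : p.IsPath) :
    m ∈ p.support ↔ T.Btw u m v := by
  constructor
  · intro hm
    have hlen := congrArg Walk.length (p.take_spec hm)
    rw [Walk.length_append, length_eq_dist_of_isPath hp] at hlen
    have := dist_le (p.takeUntil m hm)
    have := dist_le (p.dropUntil m hm)
    have := dist_triangle u m v
    unfold Btw; omega
  · intro h
    obtain ⟨q, -, hq⟩ := T.connected.exists_path_of_dist u m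
    obtain ⟨r, -, hr⟩ := T.connected.exists_path_of_dist m v
    have hqr : (q.append r).IsPath :=
      Walk.isPath_of_length_eq_dist _ (by rw [Walk.length_append, hq, hr]; exact h)
    rw [eq_of_isPath hp hqr]
    exact (Walk.mem_support_append_iff q r).2 (Or.inr r.start_mem_support)

lemma btw_left (u v : T.V) : T.Btw u u v := by simp [Btw]

lemma btw_right (u v : T.V) : T.Btw u v v := by simp [Btw]

namespace Btw

variable {u m v : T.V}

lemma symm (h : T.Btw u m v) : T.Btw v m u := by
  unfold Btw at *
  rw [SimpleGraph.dist_comm, add_comm, SimpleGraph.dist_comm, h, SimpleGraph.dist_comm]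

lemma trans_left {w y z x : T.V} (h₁ : T.Btw w y z) (h₂ : T.Btw w x y) : T.Btw w x z := by
  have := dist_triangle w x z
  have := dist_triangle x y z
  unfold Btw at *; omega

lemma trans_left_right {w y z x : T.V} (h₁ : T.Btw w y z) (h₂ : T.Btw w x y) :
    T.Btw x y z := by
  have := dist_triangle w x z
  have := dist_triangle x y z
  unfold Btw at *; omega

lemma trans_right {w x z y : T.V} (h₁ : T.Btw w x z) (h₂ : T.Btw x y z) : T.Btw w y z :=
  (h₁.symm.trans_left h₂.symm).symm

lemma trans_right_left {w x z y : T.V} (h₁ : T.Btw w x z) (h₂ : T.Btw x y z) : T.Btw w x y :=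
  (h₁.symm.trans_left_right h₂.symm).symm

lemma total {y z : T.V} (hy : T.Btw u y v) (hz : T.Btw u z v) : T.Btw u y z ∨ T.Btw u z y := by
  obtain ⟨p, hp, -⟩ := T.connected.exists_path_of_dist u v
  have hyp := (mem_support_iff_btw hp).2 hy
  have hzp := (mem_support_iff_btw hp).2 hz
  rw [← p.take_spec hyp, Walk.mem_support_append_iff] at hzp
  rcases hzp with hz' | hz'
  · exact Or.inr ((mem_support_iff_btw (hp.takeUntil hyp)).1 hz')
  · exact Or.inl (hy.trans_right_left ((mem_support_iff_btw (hp.dropUntil hyp)).1 hz'))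

lemma eq_of_dist_eq {y z : T.V} (hy : T.Btw u y v) (hz : T.Btw u z v)
    (hd : T.G.dist u y = T.G.dist u z) : y = z := by
  have := SimpleGraph.dist_comm (G := T.G) (u := y) (v := z)
  rcases hy.total hz with h | h <;> unfold Btw at h
  · exact ((T.connected.dist_eq_zero_iff).1 (by omega : T.G.dist y z = 0))
  · exact ((T.connected.dist_eq_zero_iff).1 (by omega : T.G.dist z y = 0)).symm

end Btw

end Metric

section Median

variable (T : PhyloTree X)

def IsMedian (m u v w : T.V) : Prop := T.Btw u m v ∧ T.Btw u m w ∧ T.Btw v m w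

variable {T}

lemma exists_adj_btw {u v : T.V} (h : u ≠ v) : ∃ n, T.G.Adj u n ∧ T.Btw u n v := by
  obtain ⟨p, -, hp⟩ := T.connected.exists_path_of_dist u v
  cases p with
  | nil => exact absurd rfl h
  | @cons _ n _ hadj q =>
    refine ⟨n, hadj, ?_⟩
    have := dist_le q
    have := dist_triangle u n v
    rw [Walk.length_cons] at hp
    unfold Btw
    rw [dist_eq_one_iff_adj.2 hadj] at *
    omega

/-- Induction on `dist u v`, moving `u` one step towards `v`: the median of the new triple
still works unless that step leads away from `w`, and then `u` itself is the median. -/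
lemma exists_isMedian (u v w : T.V) : ∃ m, T.IsMedian m u v w := by
  induction hn : T.G.dist u v using Nat.strong_induction_on generalizing u with
  | _ n ih =>
  by_cases huv : u = v
  · subst huv
    exact ⟨u, btw_left u u, btw_left u w, btw_left u w⟩
  obtain ⟨x, hadj, hux⟩ := exists_adj_btw huv
  have hd : T.G.dist u x = 1 := dist_eq_one_iff_adj.2 hadj
  obtain ⟨m, hxv, hxw, hvw⟩ := ih (T.G.dist x v) (by unfold Btw at hux; omega) x rfl
  have hdc : T.G.dist x u = 1 := by rw [SimpleGraph.dist_comm]; exact hd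
  have hwu := SimpleGraph.dist_comm (G := T.G) (u := w) (v := u)
  have hwx := SimpleGraph.dist_comm (G := T.G) (u := w) (v := x)
  rcases T.isTree.dist_eq_dist_add_one_of_adj w hadj with hclose | hfar
  · have hu : T.Btw u x w := by unfold Btw; omega
    exact ⟨m, hux.trans_right hxv, hu.trans_right hxw, hvw⟩
  · have hu : T.Btw x u w := by unfold Btw; omega
    refine ⟨u, btw_left u v, btw_left u w, ?_⟩
    rcases hu.total hxw with hxum | hxmu
    · have hxuv := hxv.trans_left hxum
      unfold Btw at hux hxuv; omega
    · have hm : m = x ∨ m = u := by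
        unfold Btw at hxmu
        rcases Nat.eq_zero_or_pos (T.G.dist x m) with h0 | h0
        · exact Or.inl ((T.connected.dist_eq_zero_iff).1 h0).symm
        · exact Or.inr ((T.connected.dist_eq_zero_iff).1 (by omega))
      rcases hm with rfl | rfl
      · exact hvw.trans_right hu
      · exact hvw

lemma Btw.antisymm {x y z : T.V} (h : T.Btw x y z) (h' : T.Btw x z y) : y = z := by
  have := SimpleGraph.dist_comm (G := T.G) (u := y) (v := z)
  unfold Btw at h h'
  exact (T.connected.dist_eq_zero_iff).1 (by omega)

lemma IsMedian.unique {m m' u v w : T.V} (h : T.IsMedian m u v w) (h' : T.IsMedian m' u v w) :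
    m = m' := by
  refine h.1.eq_of_dist_eq h'.1 ?_
  obtain ⟨h1, h2, h3⟩ := h
  obtain ⟨h1', h2', h3'⟩ := h'
  have := SimpleGraph.dist_comm (G := T.G) (u := v) (v := m)
  have := SimpleGraph.dist_comm (G := T.G) (u := v) (v := m')
  unfold Btw at *
  omega

lemma IsMedian.swap_left {m u v w : T.V} (h : T.IsMedian m u v w) : T.IsMedian m v u w :=
  ⟨h.1.symm, h.2.2, h.2.1⟩

lemma IsMedian.swap_right {m u v w : T.V} (h : T.IsMedian m u v w) : T.IsMedian m u w v :=
  ⟨h.2.1, h.1, h.2.2.symm⟩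

lemma IsMedian.btw_of_btw {m u v c y : T.V} (h : T.IsMedian m u v c) (hy : T.Btw u y v) :
    T.Btw c m y := by
  rcases hy.total h.1 with hyu | hmy
  · exact h.2.1.symm.trans_right_left hyu.symm
  · exact h.2.2.symm.trans_right_left (hy.trans_left_right hmy)

lemma Btw.concat {a b c d : T.V} (h₁ : T.Btw a b c) (h₂ : T.Btw b c d) (hbc : b ≠ c) :
    T.Btw a c d := by
  obtain ⟨z, hadz, hazc, hdzc⟩ := exists_isMedian a d c
  have hzcb : T.Btw z c b := h₂.symm.trans_left_right hdzc
  rcases hazc.total h₁ with hazb | habz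
  · exact absurd ((h₁.trans_left_right hazb).antisymm hzcb) hbc
  · obtain rfl : z = c := (hazc.trans_left_right habz).antisymm hzcb.symm
    exact hadz

lemma Btw.concat_left {a b c d : T.V} (h₁ : T.Btw a b c) (h₂ : T.Btw b c d) (hbc : b ≠ c) :
    T.Btw a b d :=
  (h₁.concat h₂ hbc).trans_left h₁

lemma IsMedian.btw_of_ne {m m' u v c e : T.V} (hc : T.IsMedian m u v c)
    (he : T.IsMedian m' u v e) (hne : m ≠ m') : T.Btw c m e := by
  have hcm : T.Btw c m m' := hc.btw_of_btw he.1
  have hme : T.Btw m m' e := (he.btw_of_btw hc.1).symm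
  exact (hcm.concat hme hne).trans_left hcm

variable (T) in
noncomputable def median (u v w : T.V) : T.V := (exists_isMedian u v w).choose

lemma isMedian_median (u v w : T.V) : T.IsMedian (T.median u v w) u v w :=
  (exists_isMedian u v w).choose_spec

lemma IsMedian.eq_median {m u v w : T.V} (h : T.IsMedian m u v w) : m = T.median u v w :=
  h.unique (isMedian_median u v w)

lemma median_comm_left (u v w : T.V) : T.median u v w = T.median v u w :=
  (isMedian_median u v w).swap_left.eq_median

lemma median_comm_right (u v w : T.V) : T.median u v w = T.median u w v :=
  (isMedian_median u v w).swap_right.eq_median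

lemma median_rotate (u v w : T.V) : T.median u v w = T.median v w u := by
  rw [median_comm_left, median_comm_right]

lemma median_self_left (u w : T.V) : T.median u u w = u :=
  (IsMedian.eq_median ⟨btw_left u u, btw_left u w, btw_left u w⟩).symm

lemma median_self_mid (u v : T.V) : T.median u v u = u :=
  (IsMedian.eq_median ⟨btw_left u v, btw_left u u, btw_right v u⟩).symm

lemma median_self_right (u v : T.V) : T.median u v v = v :=
  (IsMedian.eq_median ⟨btw_right u v, btw_right u v, btw_left v v⟩).symm

end Median

section Step

variable {T : PhyloTree X}

variable (T) in
noncomputable def step (u w : T.V) : T.V :=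
  if h : u = w then u else (exists_adj_btw h).choose

lemma adj_step {u w : T.V} (h : u ≠ w) : T.G.Adj u (T.step u w) := by
  rw [step, dif_neg h]; exact (exists_adj_btw h).choose_spec.1

lemma btw_step {u w : T.V} (h : u ≠ w) : T.Btw u (T.step u w) w := by
  rw [step, dif_neg h]; exact (exists_adj_btw h).choose_spec.2

lemma eq_step {u n w : T.V} (hadj : T.G.Adj u n) (h : T.Btw u n w) : n = T.step u w := by
  have huw : u ≠ w := by
    rintro rfl
    exact hadj.ne (h.antisymm (btw_left u n)).symm
  refine h.eq_of_dist_eq (btw_step huw) ?_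
  rw [dist_eq_one_iff_adj.2 hadj, dist_eq_one_iff_adj.2 (adj_step huw)]

lemma step_of_adj {u n : T.V} (h : T.G.Adj u n) : T.step u n = n :=
  (eq_step h (btw_right u n)).symm

lemma Btw.step_eq {u z w : T.V} (h : T.Btw u z w) (hz : z ≠ u) : T.step u z = T.step u w :=
  eq_step (adj_step hz.symm) (h.trans_left (btw_step hz.symm))

/-- A common first step from `u` towards `p` and `q` would shorten the path from `p` to `q`
through `u`. -/
lemma Btw.step_ne {p u q : T.V} (h : T.Btw p u q) (hp : p ≠ u) (hq : q ≠ u) :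
    T.step u p ≠ T.step u q := by
  intro he
  have h1 := btw_step hp.symm
  have h2 := btw_step hq.symm
  rw [he] at h1
  have hd : T.G.dist u (T.step u q) = 1 := dist_eq_one_iff_adj.2 (adj_step hq.symm)
  have := dist_triangle p (T.step u q) q
  have := SimpleGraph.dist_comm (G := T.G) (u := p) (v := u)
  have := SimpleGraph.dist_comm (G := T.G) (u := p) (v := T.step u q)
  have := T.connected.pos_dist_of_ne hp
  unfold Btw at *
  omega

lemma btw_of_step_ne {p u q : T.V} (h : T.step u p ≠ T.step u q) :
    T.Btw p u q := by
  obtain ⟨z, hz, hpz, hqz⟩ := exists_isMedian p q u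
  by_cases hzu : z = u
  · exact hzu ▸ hz
  · exact absurd ((hpz.symm.step_eq hzu).symm.trans (hqz.symm.step_eq hzu)) h

lemma isMedian_of_step_ne {m x y z : T.V} (hxy : T.step m x ≠ T.step m y)
    (hxz : T.step m x ≠ T.step m z) (hyz : T.step m y ≠ T.step m z) : T.IsMedian m x y z :=
  ⟨btw_of_step_ne hxy, btw_of_step_ne hxz, btw_of_step_ne hyz⟩

lemma btw_or_btw_of_adj {v w : T.V} (hadj : T.G.Adj v w) (y : T.V) :
    T.Btw y v w ∨ T.Btw v w y := by
  have h1 : T.G.dist v w = 1 := dist_eq_one_iff_adj.2 hadj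
  have h2 : T.G.dist w v = 1 := dist_eq_one_iff_adj.2 hadj.symm
  have := SimpleGraph.dist_comm (G := T.G) (u := y) (v := w)
  have := SimpleGraph.dist_comm (G := T.G) (u := y) (v := v)
  rcases T.isTree.dist_eq_dist_add_one_of_adj y hadj with h | h
  · right; unfold Btw; omega
  · left; unfold Btw; omega

end Step

section Degree

variable {T : PhyloTree X}

variable (T) in
def IsInternal (v : T.V) : Prop := ∀ x ∈ X, T.leaf x ≠ v

lemma leaf_ne_leaf {a b : α} (ha : a ∈ X) (hb : b ∈ X) (hab : a ≠ b) :
    T.leaf a ≠ T.leaf b :=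
  fun he => hab (T.leaf_inj a ha b hb he)

lemma eq_of_adj_leaf {x : α} (hx : x ∈ X) {n n' : T.V}
    (h : T.G.Adj (T.leaf x) n) (h' : T.G.Adj (T.leaf x) n') : n = n' := by
  obtain ⟨a, ha⟩ := Set.ncard_eq_one.1 (T.leaf_degree x hx)
  have hn : n ∈ T.G.neighborSet (T.leaf x) := h
  have hn' : n' ∈ T.G.neighborSet (T.leaf x) := h'
  rw [ha] at hn hn'
  exact hn.trans hn'.symm

lemma isInternal_of_adj_of_adj {v n n' : T.V} (h : T.G.Adj v n) (h' : T.G.Adj v n')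
    (hne : n ≠ n') : T.IsInternal v := by
  rintro x hx rfl
  exact hne (eq_of_adj_leaf hx h h')

lemma Btw.isInternal {p v q : T.V} (h : T.Btw p v q) (hp : p ≠ v) (hq : q ≠ v) :
    T.IsInternal v :=
  isInternal_of_adj_of_adj (adj_step hp.symm) (adj_step hq.symm) (h.step_ne hp hq)

namespace IsInternal

variable {v : T.V} (hv : T.IsInternal v)
include hv

lemma eq_or_eq_or_eq_of_adj {n₁ n₂ n₃ n : T.V} (h₁ : T.G.Adj v n₁) (h₂ : T.G.Adj v n₂)
    (h₃ : T.G.Adj v n₃) (h₁₂ : n₁ ≠ n₂) (h₁₃ : n₁ ≠ n₃) (h₂₃ : n₂ ≠ n₃)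
    (hn : T.G.Adj v n) :
    n = n₁ ∨ n = n₂ ∨ n = n₃ := by
  have hsub : ({n₁, n₂, n₃} : Set T.V) ⊆ T.G.neighborSet v := by
    rintro y (rfl | rfl | rfl) <;> assumption
  have hcard : ({n₁, n₂, n₃} : Set T.V).ncard = 3 :=
    Set.ncard_eq_three.2 ⟨_, _, _, h₁₂, h₁₃, h₂₃, rfl⟩
  have heq := Set.eq_of_subset_of_ncard_le hsub (by rw [hcard, T.internal_degree v hv])
  have hn' : n ∈ T.G.neighborSet v := hn
  rwa [← heq] at hn'

lemma exists_adj_ne (n₁ : T.V) : ∃ n, T.G.Adj v n ∧ n ≠ n₁ := by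
  by_contra! h
  have hle := Set.ncard_le_ncard (show T.G.neighborSet v ⊆ {n₁} from fun z hz => h z hz)
  rw [T.internal_degree v hv, Set.ncard_singleton] at hle
  omega

lemma exists_adj_ne_ne (n₁ n₂ : T.V) :
    ∃ n, T.G.Adj v n ∧ n ≠ n₁ ∧ n ≠ n₂ := by
  by_contra! h
  have hsub : T.G.neighborSet v ⊆ {n₁, n₂} := fun z hz => by
    by_cases hz₁ : z = n₁
    · exact Or.inl hz₁
    · exact Or.inr (h z hz hz₁)
  have hle := (Set.ncard_le_ncard hsub).trans (Set.ncard_insert_le n₁ {n₂})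
  rw [T.internal_degree v hv, Set.ncard_singleton] at hle
  omega

end IsInternal

end Degree

section Leaves

variable {T : PhyloTree X}

lemma IsMedian.not_btw {m a b c d : T.V} (h : T.IsMedian m a b c) (h' : T.IsMedian m a b d)
    (ha : a ≠ m) (hb : b ≠ m) (hc : c ≠ m) (hd : d ≠ m) : ¬ T.Btw c m d := by
  intro hcd
  have hab := h.1.step_ne ha hb
  have hac := h.2.1.step_ne ha hc
  have hbc := h.2.2.step_ne hb hc
  rcases (h.1.isInternal ha hb).eq_or_eq_or_eq_of_adj (adj_step ha.symm) (adj_step hb.symm)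
    (adj_step hc.symm) hab hac hbc (adj_step hd.symm) with had | hbd | hcd'
  · exact h'.2.1.step_ne ha hd had.symm
  · exact h'.2.2.step_ne hb hd hbd.symm
  · exact hcd.step_ne hc hd hcd'.symm

lemma isInternal_median {a b c : α} (ha : a ∈ X) (hb : b ∈ X) (hc : c ∈ X)
    (hab : a ≠ b) (hac : a ≠ c) (hbc : b ≠ c) :
    T.IsInternal (T.median (T.leaf a) (T.leaf b) (T.leaf c)) := by
  obtain ⟨h₁, h₂, h₃⟩ := isMedian_median (T.leaf a) (T.leaf b) (T.leaf c)
  set m := T.median (T.leaf a) (T.leaf b) (T.leaf c)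
  by_cases hA : T.leaf a = m
  · rw [← hA] at h₃
    exact absurd rfl
      (h₃.isInternal (leaf_ne_leaf hb ha hab.symm) (leaf_ne_leaf hc ha hac.symm) a ha)
  by_cases hB : T.leaf b = m
  · rw [← hB] at h₂
    exact absurd rfl (h₂.isInternal (leaf_ne_leaf ha hb hab) (leaf_ne_leaf hc hb hbc.symm) b hb)
  exact h₁.isInternal hA hB

lemma exists_leaf_step_eq {v n : T.V} (hadj : T.G.Adj v n) :
    ∃ x ∈ X, T.step v (T.leaf x) = n := by
  obtain ⟨w, hw, hmax⟩ := Set.Finite.exists_maximalFor (fun w => T.G.dist v w)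
    {w | T.Btw v n w} (Set.toFinite _) ⟨n, btw_right v n⟩
  have hw : T.Btw v n w := hw
  by_cases hleaf : ∃ x ∈ X, T.leaf x = w
  · obtain ⟨x, hx, rfl⟩ := hleaf
    exact ⟨x, hx, (eq_step hadj hw).symm⟩
  push Not at hleaf
  obtain ⟨y, hy, hyv⟩ := IsInternal.exists_adj_ne hleaf (T.step w v)
  rcases btw_or_btw_of_adj hy v with hvwy | hwyv
  · have hwy := dist_eq_one_iff_adj.2 hy
    have : T.G.dist v y ≤ T.G.dist v w :=
      hmax (j := y) (hvwy.trans_left hw) (by unfold Btw at hvwy; simp only; omega)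
    unfold Btw at hvwy
    omega
  · exact absurd (eq_step hy hwyv) hyv

lemma exists_eq_median_leaf (v : T.V) :
    ∃ t : α × α × α, t.1 ∈ X ∧ t.2.1 ∈ X ∧ t.2.2 ∈ X ∧
      T.median (T.leaf t.1) (T.leaf t.2.1) (T.leaf t.2.2) = v := by
  by_cases hleaf : ∃ x ∈ X, T.leaf x = v
  · obtain ⟨x, hx, rfl⟩ := hleaf
    exact ⟨(x, x, x), hx, hx, hx, median_self_left _ _⟩
  push Not at hleaf
  obtain ⟨n₁, n₂, n₃, h₁₂, h₁₃, h₂₃, hN⟩ :=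
    Set.ncard_eq_three.1 (T.internal_degree v hleaf)
  have hadj : ∀ n ∈ ({n₁, n₂, n₃} : Set T.V), T.G.Adj v n := fun n hn => by
    rw [← hN] at hn; exact hn
  obtain ⟨x₁, hx₁, hs₁⟩ := exists_leaf_step_eq (hadj n₁ (by simp))
  obtain ⟨x₂, hx₂, hs₂⟩ := exists_leaf_step_eq (hadj n₂ (by simp))
  obtain ⟨x₃, hx₃, hs₃⟩ := exists_leaf_step_eq (hadj n₃ (by simp))
  refine ⟨(x₁, x₂, x₃), hx₁, hx₂, hx₃, (IsMedian.eq_median ?_).symm⟩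
  exact isMedian_of_step_ne (by rwa [hs₁, hs₂]) (by rwa [hs₁, hs₃]) (by rwa [hs₂, hs₃])

lemma exists_leaf_isMedian_of_btw {x u y : T.V} (h : T.Btw x u y) (hx : x ≠ u) (hy : y ≠ u) :
    ∃ s ∈ X, T.IsMedian u x y (T.leaf s) := by
  obtain ⟨n, hn, hnx, hny⟩ := (h.isInternal hx hy).exists_adj_ne_ne (T.step u x) (T.step u y)
  obtain ⟨s, hs, hsn⟩ := exists_leaf_step_eq hn
  exact ⟨s, hs, isMedian_of_step_ne (h.step_ne hx hy) (by rw [hsn]; exact hnx.symm)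
    (by rw [hsn]; exact hny.symm)⟩

lemma Btw.ne_of_isInternal {x y : α} {v : T.V} (h : T.Btw (T.leaf x) v (T.leaf y))
    (hx : x ∈ X) (hv : T.IsInternal v) : x ≠ y := by
  rintro rfl
  exact hv x hx (h.antisymm (btw_left _ _)).symm

lemma IsInternal.exists_leaves_btw {v w : T.V} (hv : T.IsInternal v) (hadj : T.G.Adj v w) :
    ∃ x ∈ X, ∃ y ∈ X, T.Btw (T.leaf x) v w ∧ T.Btw (T.leaf y) v w ∧
      T.Btw (T.leaf x) v (T.leaf y) := by
  obtain ⟨n₁, hn₁, hn₁w⟩ := hv.exists_adj_ne w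
  obtain ⟨n₂, hn₂, hn₂w, hn₂₁⟩ := hv.exists_adj_ne_ne w n₁
  obtain ⟨x, hx, hxn⟩ := exists_leaf_step_eq hn₁
  obtain ⟨y, hy, hyn⟩ := exists_leaf_step_eq hn₂
  refine ⟨x, hx, y, hy, btw_of_step_ne ?_, btw_of_step_ne ?_, btw_of_step_ne ?_⟩
  · rwa [hxn, step_of_adj hadj]
  · rwa [hyn, step_of_adj hadj]
  · rw [hxn, hyn]; exact hn₂₁.symm

lemma not_adj_leaf_leaf (hX : 3 ≤ X.card) {x y : α} (hx : x ∈ X) (hy : y ∈ X) :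
    ¬ T.G.Adj (T.leaf x) (T.leaf y) := by
  classical
  intro hadj
  obtain ⟨z, hz, hzxy⟩ := Finset.exists_mem_notMem_of_card_lt_card
    ((Finset.card_le_two : ({x, y} : Finset α).card ≤ 2).trans_lt hX)
  have hzx : T.leaf x ≠ T.leaf z := leaf_ne_leaf hx hz (by rintro rfl; simp at hzxy)
  have hzy : T.leaf z ≠ T.leaf y := leaf_ne_leaf hz hy (by rintro rfl; simp at hzxy)
  have hstep : T.step (T.leaf x) (T.leaf z) = T.leaf y := eq_of_adj_leaf hx (adj_step hzx) hadj
  have hbtw : T.Btw (T.leaf x) (T.leaf y) (T.leaf z) := hstep ▸ btw_step hzx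
  exact hbtw.isInternal hadj.ne hzy y hy rfl

end Leaves

section Quartets

variable {T : PhyloTree X} {a b c d : α}

lemma resolvesAs_iff : T.ResolvesAs a b c d ↔
    ∀ v, T.Btw (T.leaf a) v (T.leaf b) → ¬ T.Btw (T.leaf c) v (T.leaf d) := by
  constructor
  · rintro ⟨p, q, hp, hq, hpq⟩ v hab hcd
    exact hpq v ((mem_support_iff_btw hp).2 hab) ((mem_support_iff_btw hq).2 hcd)
  · intro h
    obtain ⟨p, hp, -⟩ := T.connected.exists_path_of_dist (T.leaf a) (T.leaf b)
    obtain ⟨q, hq, -⟩ := T.connected.exists_path_of_dist (T.leaf c) (T.leaf d)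
    exact ⟨p, q, hp, hq, fun v hvp hvq =>
      h v ((mem_support_iff_btw hp).1 hvp) ((mem_support_iff_btw hq).1 hvq)⟩

namespace ResolvesAs

lemma swap_left (h : T.ResolvesAs a b c d) : T.ResolvesAs b a c d :=
  resolvesAs_iff.2 fun v hv => resolvesAs_iff.1 h v hv.symm

lemma swap_right (h : T.ResolvesAs a b c d) : T.ResolvesAs a b d c :=
  resolvesAs_iff.2 fun v hv hv' => resolvesAs_iff.1 h v hv hv'.symm

lemma median_eq (h : T.ResolvesAs a b c d) :
    T.median (T.leaf a) (T.leaf b) (T.leaf c) = T.median (T.leaf a) (T.leaf b) (T.leaf d) := by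
  by_contra hne
  exact resolvesAs_iff.1 h _ (isMedian_median _ _ _).1
    ((isMedian_median _ _ _).btw_of_ne (isMedian_median _ _ _) hne)

end ResolvesAs

variable (ha : a ∈ X) (hb : b ∈ X) (hc : c ∈ X) (hd : d ∈ X)
include ha hb hc hd

lemma resolvesAs_of_median_eq (hab : a ≠ b) (hac : a ≠ c) (hbc : b ≠ c)
    (h : T.median (T.leaf a) (T.leaf b) (T.leaf c) = T.median (T.leaf a) (T.leaf b) (T.leaf d)) :
    T.ResolvesAs a b c d := by
  have hm := isInternal_median (T := T) ha hb hc hab hac hbc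
  have hc' := isMedian_median (T.leaf a) (T.leaf b) (T.leaf c)
  have hd' := isMedian_median (T.leaf a) (T.leaf b) (T.leaf d)
  rw [← h] at hd'
  refine resolvesAs_iff.2 fun v hv hcd => ?_
  exact hc'.not_btw hd' (hm a ha) (hm b hb) (hm c hc) (hm d hd)
    (hcd.trans_left (hc'.btw_of_btw hv))

lemma resolvesAs_of_btw_median (hab : a ≠ b) (hac : a ≠ c) (hbc : b ≠ c)
    (hne : T.median (T.leaf a) (T.leaf b) (T.leaf c) ≠ T.median (T.leaf a) (T.leaf b) (T.leaf d))
    (hbtw : T.Btw (T.leaf a) (T.median (T.leaf a) (T.leaf b) (T.leaf c))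
      (T.median (T.leaf a) (T.leaf b) (T.leaf d))) :
    T.ResolvesAs a c b d := by
  have hc' := isMedian_median (T.leaf a) (T.leaf b) (T.leaf c)
  have hd' := isMedian_median (T.leaf a) (T.leaf b) (T.leaf d)
  refine resolvesAs_of_median_eq ha hc hb hd hac hab hbc.symm ?_
  rw [← hc'.swap_right.eq_median]
  exact IsMedian.eq_median ⟨hc'.2.1, hd'.2.1.trans_left hbtw, hc'.btw_of_ne hd' hne⟩

lemma resolvesAs_trichotomy (hab : a ≠ b) (hac : a ≠ c) (had : a ≠ d) (hbc : b ≠ c)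
    (hbd : b ≠ d) :
    T.ResolvesAs a b c d ∨ T.ResolvesAs a c b d ∨ T.ResolvesAs a d b c := by
  by_cases heq : T.median (T.leaf a) (T.leaf b) (T.leaf c) =
      T.median (T.leaf a) (T.leaf b) (T.leaf d)
  · exact Or.inl (resolvesAs_of_median_eq ha hb hc hd hab hac hbc heq)
  rcases (isMedian_median (T.leaf a) (T.leaf b) (T.leaf c)).1.total
    (isMedian_median (T.leaf a) (T.leaf b) (T.leaf d)).1 with h | h
  · exact Or.inr (Or.inl (resolvesAs_of_btw_median ha hb hc hd hab hac hbc heq h))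
  · exact Or.inr (Or.inr (resolvesAs_of_btw_median ha hb hd hc hab had hbd (Ne.symm heq) h))

lemma not_resolvesAs_and_resolvesAs (hab : a ≠ b) (hac : a ≠ c) (hbc : b ≠ c) :
    ¬ (T.ResolvesAs a b c d ∧ T.ResolvesAs a c b d) := by
  rintro ⟨h₁, h₂⟩
  have hm := isInternal_median (T := T) ha hb hc hab hac hbc
  have habc := isMedian_median (T.leaf a) (T.leaf b) (T.leaf c)
  have habd := isMedian_median (T.leaf a) (T.leaf b) (T.leaf d)
  have hacd := isMedian_median (T.leaf a) (T.leaf c) (T.leaf d)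
  rw [← h₁.median_eq] at habd
  rw [← h₂.median_eq, ← habc.swap_right.eq_median] at hacd
  exact habc.not_btw habd (hm a ha) (hm b hb) (hm c hc) (hm d hd) hacd.2.2

end Quartets

section FifthLeaf

variable {T : PhyloTree X} {a b c d e : α}

variable (ha : a ∈ X) (hb : b ∈ X) (hc : c ∈ X) (hd : d ∈ X) (he : e ∈ X)
include ha hb hc hd he

lemma resolvesAs_fifth_leaf_of_btw (hac : a ≠ c) (hae : a ≠ e) (hbc : b ≠ c) (hbe : b ≠ e)
    (hce : c ≠ e)
    (h : T.median (T.leaf a) (T.leaf b) (T.leaf c) = T.median (T.leaf a) (T.leaf b) (T.leaf d))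
    (hne : T.median (T.leaf a) (T.leaf b) (T.leaf e) ≠ T.median (T.leaf a) (T.leaf b) (T.leaf c))
    (hbtw : T.Btw (T.leaf a) (T.median (T.leaf a) (T.leaf b) (T.leaf e))
      (T.median (T.leaf a) (T.leaf b) (T.leaf c))) :
    T.ResolvesAs a e c d ∧ T.ResolvesAs b e c d := by
  have hC := isMedian_median (T.leaf a) (T.leaf b) (T.leaf c)
  have hD := isMedian_median (T.leaf a) (T.leaf b) (T.leaf d)
  have hE := isMedian_median (T.leaf a) (T.leaf b) (T.leaf e)
  rw [← h] at hD
  set M := T.median (T.leaf a) (T.leaf b) (T.leaf c)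
  set m := T.median (T.leaf a) (T.leaf b) (T.leaf e)
  have hbMe : T.Btw (T.leaf b) M (T.leaf e) := by
    have hbMm : T.Btw (T.leaf b) M m := (hC.1.trans_left_right hbtw).symm
    exact hbMm.concat_left (hE.btw_of_btw hC.1).symm hne.symm
  constructor
  · refine resolvesAs_of_median_eq ha he hc hd hae hac hce.symm ?_
    rw [← IsMedian.eq_median ⟨hE.2.1, hC.2.1.trans_left hbtw, hE.btw_of_ne hC hne⟩,
      ← IsMedian.eq_median ⟨hE.2.1, hD.2.1.trans_left hbtw, hE.btw_of_ne hD hne⟩]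
  · refine resolvesAs_of_median_eq hb he hc hd hbe hbc hce.symm ?_
    rw [← IsMedian.eq_median ⟨hbMe, hC.2.2, (hC.btw_of_ne hE hne.symm).symm⟩,
      ← IsMedian.eq_median ⟨hbMe, hD.2.2, (hD.btw_of_ne hE hne.symm).symm⟩]

lemma ResolvesAs.fifth_leaf (hab : a ≠ b) (hac : a ≠ c) (had : a ≠ d) (hae : a ≠ e)
    (hbc : b ≠ c) (hbd : b ≠ d) (hbe : b ≠ e) (hce : c ≠ e) (h : T.ResolvesAs a b c d) :
    (T.ResolvesAs a e c d ∧ T.ResolvesAs b e c d) ∨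
      (T.ResolvesAs a b c e ∧ T.ResolvesAs a b d e) := by
  have hcd := h.median_eq
  by_cases heq : T.median (T.leaf a) (T.leaf b) (T.leaf e) =
      T.median (T.leaf a) (T.leaf b) (T.leaf c)
  · exact Or.inr ⟨resolvesAs_of_median_eq ha hb hc he hab hac hbc heq.symm,
      resolvesAs_of_median_eq ha hb hd he hab had hbd (hcd ▸ heq.symm)⟩
  left
  rcases (isMedian_median (T.leaf a) (T.leaf b) (T.leaf e)).1.total
    (isMedian_median (T.leaf a) (T.leaf b) (T.leaf c)).1 with hbtw | hbtw
  · exact resolvesAs_fifth_leaf_of_btw ha hb hc hd he hac hae hbc hbe hce hcd heq hbtw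
  · have hba := median_comm_left (T := T) (T.leaf b) (T.leaf a)
    exact (resolvesAs_fifth_leaf_of_btw hb ha hc hd he hbc hbe hac hae hce
      (by rw [hba, hba, hcd]) (by rwa [hba, hba])
      (by rw [hba, hba]; exact ((isMedian_median _ _ _).1.trans_left_right hbtw).symm)).symm

lemma ResolvesAs.not_fifth_leaf (hab : a ≠ b) (hac : a ≠ c) (had : a ≠ d) (hae : a ≠ e)
    (hbc : b ≠ c) (hbe : b ≠ e) (hcd : c ≠ d) (hce : c ≠ e) (h : T.ResolvesAs a c b d) :
    ¬ ((T.ResolvesAs a e c d ∧ T.ResolvesAs b e c d) ∨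
      (T.ResolvesAs a b c e ∧ T.ResolvesAs a b d e)) := by
  rintro (⟨r₁, r₂⟩ | ⟨r₁, r₂⟩) <;>
    rcases h.fifth_leaf ha hc hb hd he hac hab had hae hbc.symm hcd hce hbe with
      ⟨p₁, p₂⟩ | ⟨p₁, p₂⟩
  · exact not_resolvesAs_and_resolvesAs he hb hc hd hbe.symm hce.symm hbc
      ⟨r₂.swap_left, p₂.swap_left⟩
  · exact not_resolvesAs_and_resolvesAs ha he hc hd hae hac hce.symm ⟨r₁, p₂.swap_right⟩
  · exact not_resolvesAs_and_resolvesAs ha hb he hd hab hae hbe ⟨r₂.swap_right, p₁⟩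
  · exact not_resolvesAs_and_resolvesAs ha hb hc he hab hac hbc ⟨r₁, p₁⟩

lemma resolvesAs_iff_fifth_leaf (hab : a ≠ b) (hac : a ≠ c) (had : a ≠ d) (hae : a ≠ e)
    (hbc : b ≠ c) (hbd : b ≠ d) (hbe : b ≠ e) (hcd : c ≠ d) (hce : c ≠ e)
    (hde : d ≠ e) :
    T.ResolvesAs a b c d ↔ (T.ResolvesAs a e c d ∧ T.ResolvesAs b e c d) ∨
      (T.ResolvesAs a b c e ∧ T.ResolvesAs a b d e) := by
  refine ⟨ResolvesAs.fifth_leaf ha hb hc hd he hab hac had hae hbc hbd hbe hce, fun h => ?_⟩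
  rcases resolvesAs_trichotomy ha hb hc hd hab hac had hbc hbd with habcd | hacbd | hadbc
  · exact habcd
  · exact absurd h (hacbd.not_fifth_leaf ha hb hc hd he hab hac had hae hbc hbe hcd hce)
  · refine absurd ?_ (hadbc.not_fifth_leaf ha hb hd hc he hab had hac hae hbd hbe hcd.symm hde)
    rcases h with ⟨r₁, r₂⟩ | ⟨r₁, r₂⟩
    · exact Or.inl ⟨r₁.swap_right, r₂.swap_right⟩
    · exact Or.inr ⟨r₂, r₁⟩

end FifthLeaf

section Agreement

def AgreeOnQuartets (T T' : PhyloTree X) : Prop :=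
  ∀ ⦃a b c d : α⦄, a ∈ X → b ∈ X → c ∈ X → d ∈ X →
    a ≠ b → a ≠ c → a ≠ d → b ≠ c → b ≠ d → c ≠ d →
    (T.ResolvesAs a b c d ↔ T'.ResolvesAs a b c d)

variable {T T' : PhyloTree X}

lemma AgreeOnQuartets.symm (H : AgreeOnQuartets T T') : AgreeOnQuartets T' T :=
  fun _ _ _ _ ha hb hc hd hab hac had hbc hbd hcd =>
    (H ha hb hc hd hab hac had hbc hbd hcd).symm

lemma agreeOnQuartets_of_agree_through {x₀ : α} (hx₀ : x₀ ∈ X)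
    (H : ∀ ⦃a b c d : α⦄, a ∈ X → b ∈ X → c ∈ X → d ∈ X →
      a ≠ b → a ≠ c → a ≠ d → b ≠ c → b ≠ d → c ≠ d →
      (x₀ = a ∨ x₀ = b ∨ x₀ = c ∨ x₀ = d) →
      (T.ResolvesAs a b c d ↔ T'.ResolvesAs a b c d)) :
    AgreeOnQuartets T T' := by
  intro a b c d ha hb hc hd hab hac had hbc hbd hcd
  by_cases hx : x₀ = a ∨ x₀ = b ∨ x₀ = c ∨ x₀ = d
  · exact H ha hb hc hd hab hac had hbc hbd hcd hx
  push Not at hx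
  obtain ⟨hae, hbe, hce, hde⟩ := hx
  rw [resolvesAs_iff_fifth_leaf ha hb hc hd hx₀ hab hac had hae.symm hbc hbd hbe.symm hcd
      hce.symm hde.symm,
    resolvesAs_iff_fifth_leaf ha hb hc hd hx₀ hab hac had hae.symm hbc hbd hbe.symm hcd
      hce.symm hde.symm,
    H ha hx₀ hc hd hae.symm hac had hce hde hcd (Or.inr (Or.inl rfl)),
    H hb hx₀ hc hd hbe.symm hbc hbd hce hde hcd (Or.inr (Or.inl rfl)),
    H ha hb hc hx₀ hab hac hae.symm hbc hbe.symm hce.symm (Or.inr (Or.inr (Or.inr rfl))),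
    H ha hb hd hx₀ hab had hae.symm hbd hbe.symm hde.symm (Or.inr (Or.inr (Or.inr rfl)))]

end Agreement

section MedianTransfer

variable {T T' : PhyloTree X} {a b c d e f g : α}

variable (H : AgreeOnQuartets T T') {m : T.V}
include H

lemma AgreeOnQuartets.median_congr_right (ha : a ∈ X) (hb : b ∈ X) (hc : c ∈ X) (hg : g ∈ X)
    (hab : a ≠ b) (hac : a ≠ c) (hbc : b ≠ c)
    (hmc : T.IsMedian m (T.leaf a) (T.leaf b) (T.leaf c))
    (hmg : T.IsMedian m (T.leaf a) (T.leaf b) (T.leaf g)) :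
    T'.median (T'.leaf a) (T'.leaf b) (T'.leaf g) =
      T'.median (T'.leaf a) (T'.leaf b) (T'.leaf c) := by
  by_cases hgc : g = c
  · rw [hgc]
  have hm : T.IsInternal m := hmc.eq_median ▸ isInternal_median ha hb hc hab hac hbc
  have hga : g ≠ a := by
    rintro rfl
    exact hm g hg (hmg.eq_median.trans (median_self_mid _ _)).symm
  have hgb : g ≠ b := by
    rintro rfl
    exact hm g hg (hmg.eq_median.trans (median_self_right _ _)).symm
  have hT : T.ResolvesAs a b c g :=
    resolvesAs_of_median_eq ha hb hc hg hab hac hbc (hmc.eq_median.symm.trans hmg.eq_median)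
  exact ((H ha hb hc hg hab hac hga.symm hbc hgb.symm (Ne.symm hgc)).1 hT).median_eq.symm

lemma AgreeOnQuartets.median_congr_right₂ (ha : a ∈ X) (hb : b ∈ X) (hc : c ∈ X)
    (he : e ∈ X) (hf : f ∈ X) (hab : a ≠ b) (hac : a ≠ c) (hbc : b ≠ c) (hae : a ≠ e)
    (haf : a ≠ f) (hef : e ≠ f) (h₁ : T.IsMedian m (T.leaf a) (T.leaf b) (T.leaf c))
    (h₂ : T.IsMedian m (T.leaf a) (T.leaf e) (T.leaf f)) :
    T'.median (T'.leaf a) (T'.leaf e) (T'.leaf f) =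
      T'.median (T'.leaf a) (T'.leaf b) (T'.leaf c) := by
  have hm : T.IsInternal m := h₁.eq_median ▸ isInternal_median ha hb hc hab hac hbc
  have sab := h₁.1.step_ne (hm a ha) (hm b hb)
  have sac := h₁.2.1.step_ne (hm a ha) (hm c hc)
  have sbc := h₁.2.2.step_ne (hm b hb) (hm c hc)
  rcases hm.eq_or_eq_or_eq_of_adj (adj_step (hm a ha).symm) (adj_step (hm b hb).symm)
    (adj_step (hm c hc).symm) sab sac sbc (adj_step (hm e he).symm) with h | h | h
  · exact absurd h.symm (h₂.1.step_ne (hm a ha) (hm e he))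
  · have hmec : T.IsMedian m (T.leaf a) (T.leaf e) (T.leaf c) :=
      isMedian_of_step_ne (by rwa [h]) sac (by rwa [h])
    calc T'.median (T'.leaf a) (T'.leaf e) (T'.leaf f)
        = T'.median (T'.leaf a) (T'.leaf e) (T'.leaf c) :=
          (H.median_congr_right ha he hf hc hae haf hef h₂ hmec).symm
      _ = T'.median (T'.leaf a) (T'.leaf c) (T'.leaf e) := median_comm_right _ _ _
      _ = T'.median (T'.leaf a) (T'.leaf c) (T'.leaf b) :=
          H.median_congr_right ha hc hb he hac hab hbc.symm h₁.swap_right hmec.swap_right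
      _ = T'.median (T'.leaf a) (T'.leaf b) (T'.leaf c) := (median_comm_right _ _ _).symm
  · have hmbe : T.IsMedian m (T.leaf a) (T.leaf b) (T.leaf e) :=
      isMedian_of_step_ne sab (by rwa [h]) (by rwa [h])
    calc T'.median (T'.leaf a) (T'.leaf e) (T'.leaf f)
        = T'.median (T'.leaf a) (T'.leaf e) (T'.leaf b) :=
          (H.median_congr_right ha he hf hb hae haf hef h₂ hmbe.swap_right).symm
      _ = T'.median (T'.leaf a) (T'.leaf b) (T'.leaf e) := (median_comm_right _ _ _).symm
      _ = T'.median (T'.leaf a) (T'.leaf b) (T'.leaf c) :=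
          H.median_congr_right ha hb hc he hab hac hbc h₁ hmbe

lemma AgreeOnQuartets.median_congr_of_step_eq (ha : a ∈ X) (hb : b ∈ X) (hc : c ∈ X)
    (hd : d ∈ X) (he : e ∈ X) (hf : f ∈ X) (hab : a ≠ b) (hac : a ≠ c) (hbc : b ≠ c)
    (hde : d ≠ e) (hdf : d ≠ f) (hef : e ≠ f)
    (h₁ : T.IsMedian m (T.leaf a) (T.leaf b) (T.leaf c))
    (h₂ : T.IsMedian m (T.leaf d) (T.leaf e) (T.leaf f))
    (hda : T.step m (T.leaf d) = T.step m (T.leaf a)) :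
    T'.median (T'.leaf d) (T'.leaf e) (T'.leaf f) =
      T'.median (T'.leaf a) (T'.leaf b) (T'.leaf c) := by
  have hm : T.IsInternal m := h₁.eq_median ▸ isInternal_median ha hb hc hab hac hbc
  have sab := h₁.1.step_ne (hm a ha) (hm b hb)
  have sac := h₁.2.1.step_ne (hm a ha) (hm c hc)
  have hmd : T.IsMedian m (T.leaf d) (T.leaf b) (T.leaf c) :=
    isMedian_of_step_ne (by rwa [hda]) (by rwa [hda]) (h₁.2.2.step_ne (hm b hb) (hm c hc))
  have hdb : d ≠ b := by rintro rfl; exact sab hda.symm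
  have hdc : d ≠ c := by rintro rfl; exact sac hda.symm
  calc T'.median (T'.leaf d) (T'.leaf e) (T'.leaf f)
      = T'.median (T'.leaf d) (T'.leaf b) (T'.leaf c) :=
        H.median_congr_right₂ hd hb hc he hf hdb hdc hbc hde hdf hef hmd h₂
    _ = T'.median (T'.leaf b) (T'.leaf c) (T'.leaf d) := median_rotate _ _ _
    _ = T'.median (T'.leaf b) (T'.leaf c) (T'.leaf a) :=
        H.median_congr_right hb hc ha hd hbc hab.symm hac.symm h₁.swap_left.swap_right
          hmd.swap_left.swap_right
    _ = T'.median (T'.leaf a) (T'.leaf b) (T'.leaf c) := (median_rotate _ _ _).symm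

lemma AgreeOnQuartets.median_congr_of_isMedian (ha : a ∈ X) (hb : b ∈ X) (hc : c ∈ X)
    (hd : d ∈ X) (he : e ∈ X) (hf : f ∈ X) (hab : a ≠ b) (hac : a ≠ c) (hbc : b ≠ c)
    (hde : d ≠ e) (hdf : d ≠ f) (hef : e ≠ f)
    (h₁ : T.IsMedian m (T.leaf a) (T.leaf b) (T.leaf c))
    (h₂ : T.IsMedian m (T.leaf d) (T.leaf e) (T.leaf f)) :
    T'.median (T'.leaf d) (T'.leaf e) (T'.leaf f) =
      T'.median (T'.leaf a) (T'.leaf b) (T'.leaf c) := by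
  have hm : T.IsInternal m := h₁.eq_median ▸ isInternal_median ha hb hc hab hac hbc
  rcases hm.eq_or_eq_or_eq_of_adj (adj_step (hm a ha).symm) (adj_step (hm b hb).symm)
    (adj_step (hm c hc).symm) (h₁.1.step_ne (hm a ha) (hm b hb))
    (h₁.2.1.step_ne (hm a ha) (hm c hc)) (h₁.2.2.step_ne (hm b hb) (hm c hc))
    (adj_step (hm d hd).symm) with h | h | h
  · exact H.median_congr_of_step_eq ha hb hc hd he hf hab hac hbc hde hdf hef h₁ h₂ h
  · exact (H.median_congr_of_step_eq hb ha hc hd he hf hab.symm hbc hac hde hdf hef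
      h₁.swap_left h₂ h).trans (median_comm_left _ _ _)
  · exact (H.median_congr_of_step_eq hc ha hb hd he hf hac.symm hbc.symm hab hde hdf hef
      h₁.swap_right.swap_left h₂ h).trans (median_rotate _ _ _)

omit H in
lemma exists_median_eq_leaf (h : ¬ (a ≠ b ∧ a ≠ c ∧ b ≠ c)) :
    ∃ g, (g = a ∨ g = b ∨ g = c) ∧
      ∀ S : PhyloTree X, S.median (S.leaf a) (S.leaf b) (S.leaf c) = S.leaf g := by
  by_cases hab : a = b
  · exact ⟨a, Or.inl rfl, fun S => hab ▸ median_self_left _ _⟩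
  by_cases hac : a = c
  · exact ⟨a, Or.inl rfl, fun S => hac ▸ median_self_mid _ _⟩
  have hbc : b = c := by tauto
  exact ⟨b, Or.inr (Or.inl rfl), fun S => hbc ▸ median_self_right _ _⟩

lemma AgreeOnQuartets.median_congr (ha : a ∈ X) (hb : b ∈ X) (hc : c ∈ X)
    (hd : d ∈ X) (he : e ∈ X) (hf : f ∈ X)
    (h : T.median (T.leaf a) (T.leaf b) (T.leaf c) = T.median (T.leaf d) (T.leaf e) (T.leaf f)) :
    T'.median (T'.leaf a) (T'.leaf b) (T'.leaf c) =
      T'.median (T'.leaf d) (T'.leaf e) (T'.leaf f) := by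
  by_cases h₁ : a ≠ b ∧ a ≠ c ∧ b ≠ c <;> by_cases h₂ : d ≠ e ∧ d ≠ f ∧ e ≠ f
  · exact (H.median_congr_of_isMedian ha hb hc hd he hf h₁.1 h₁.2.1 h₁.2.2 h₂.1 h₂.2.1
      h₂.2.2
      (isMedian_median _ _ _) (h ▸ isMedian_median _ _ _)).symm
  · obtain ⟨g, hg, hS⟩ := exists_median_eq_leaf (X := X) h₂
    have hgX : g ∈ X := by rcases hg with rfl | rfl | rfl <;> assumption
    exact absurd (h.trans (hS T)).symm (isInternal_median ha hb hc h₁.1 h₁.2.1 h₁.2.2 g hgX)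
  · obtain ⟨g, hg, hS⟩ := exists_median_eq_leaf (X := X) h₁
    have hgX : g ∈ X := by rcases hg with rfl | rfl | rfl <;> assumption
    exact absurd ((hS T).symm.trans h) (isInternal_median hd he hf h₂.1 h₂.2.1 h₂.2.2 g hgX)
  · obtain ⟨g, hg, hS⟩ := exists_median_eq_leaf (X := X) h₁
    obtain ⟨g', hg', hS'⟩ := exists_median_eq_leaf (X := X) h₂
    have hgX : g ∈ X := by rcases hg with rfl | rfl | rfl <;> assumption
    have hgX' : g' ∈ X := by rcases hg' with rfl | rfl | rfl <;> assumption
    have hgg' : g = g' := T.leaf_inj g hgX g' hgX' (by rw [← hS T, ← hS' T, h])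
    rw [hS T', hS' T', hgg']

end MedianTransfer

section Adjacency

variable {T : PhyloTree X} {p q c c₁ c₂ : α}

/-- The leaf `s` hangs off the first vertex after `m` on the way to `med p q c`. -/
lemma exists_leaf_resolvesAs_of_not_adj (hp : p ∈ X) (hq : q ∈ X) (hc : c ∈ X) (hpq : p ≠ q)
    {m : T.V} (hm : T.Btw (T.leaf p) m (T.median (T.leaf p) (T.leaf q) (T.leaf c)))
    (hne : m ≠ T.median (T.leaf p) (T.leaf q) (T.leaf c))
    (hnadj : ¬ T.G.Adj m (T.median (T.leaf p) (T.leaf q) (T.leaf c))) :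
    ∃ s ∈ X, s ≠ p ∧ s ≠ q ∧ s ≠ c ∧ T.ResolvesAs p s q c ∧
      T.median (T.leaf p) (T.leaf q) (T.leaf s) ≠ m ∧
      T.Btw (T.leaf p) m (T.median (T.leaf p) (T.leaf q) (T.leaf s)) := by
  have hc' := isMedian_median (T.leaf p) (T.leaf q) (T.leaf c)
  set m₂ := T.median (T.leaf p) (T.leaf q) (T.leaf c)
  have hmu : T.Btw m (T.step m m₂) m₂ := btw_step hne
  set u := T.step m m₂
  have hum : u ≠ m := (adj_step hne).ne.symm
  have hum₂ : u ≠ m₂ := fun h => hnadj (h ▸ adj_step hne)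
  have hu : T.IsInternal u := hmu.isInternal hum.symm hum₂.symm
  obtain ⟨s, hs, hus⟩ := exists_leaf_isMedian_of_btw hmu hum.symm hum₂.symm
  have hpmu : T.Btw (T.leaf p) m u := hm.trans_right_left hmu
  have hpum₂ : T.Btw (T.leaf p) u m₂ := hm.trans_right hmu
  have hpqs : T.IsMedian u (T.leaf p) (T.leaf q) (T.leaf s) :=
    ⟨hc'.1.trans_left hpum₂, hpmu.concat hus.2.1 hum.symm,
      (hc'.1.trans_left_right hpum₂).symm.concat hus.2.2 hum₂.symm⟩
  have hsp : s ≠ p := by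
    rintro rfl; exact hu s hs (hpqs.2.1.antisymm (btw_left _ _)).symm
  have hsq : s ≠ q := by
    rintro rfl; exact hu s hs (hpqs.2.2.antisymm (btw_left _ _)).symm
  have hsc : s ≠ c := by
    rintro rfl; exact hum₂ hpqs.eq_median
  rw [hpqs.eq_median] at hum hum₂ hpmu hpum₂
  exact ⟨s, hs, hsp, hsq, hsc,
    resolvesAs_of_btw_median hp hq hs hc hpq hsp.symm hsq.symm hum₂ hpum₂, hum, hpmu⟩

/-- Whichever side of the edge `vw` the leaf `s` is on, one of the two quartets has both of
its paths through `v` or both through `w`. -/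
lemma ResolvesAs.not_resolvesAs_of_adj {v w : T.V} {s : α} (hadj : T.G.Adj v w)
    (hp : T.Btw (T.leaf p) v w) (hq : T.Btw v w (T.leaf q))
    (hc₁ : T.Btw (T.leaf p) v (T.leaf c₁)) (hc₂ : T.Btw (T.leaf q) w (T.leaf c₂))
    (h : T.ResolvesAs p c₁ q s) :
    ¬ T.ResolvesAs p s q c₂ := by
  intro h'
  rcases btw_or_btw_of_adj hadj (T.leaf s) with hs | hs
  · exact resolvesAs_iff.1 h v hc₁ (hs.concat_left hq hadj.ne).symm
  · exact resolvesAs_iff.1 h' w (hp.concat hs hadj.ne) hc₂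

end Adjacency

section LabelIso

variable {T T' : PhyloTree X} {p q c₁ c₂ : α}

noncomputable def medianMap (T T' : PhyloTree X) (v : T.V) : T'.V :=
  let t := (exists_eq_median_leaf v).choose
  T'.median (T'.leaf t.1) (T'.leaf t.2.1) (T'.leaf t.2.2)

variable (H : AgreeOnQuartets T T')
include H

lemma AgreeOnQuartets.medianMap_median {x y z : α} (hx : x ∈ X) (hy : y ∈ X) (hz : z ∈ X) :
    medianMap T T' (T.median (T.leaf x) (T.leaf y) (T.leaf z)) =
      T'.median (T'.leaf x) (T'.leaf y) (T'.leaf z) := by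
  obtain ⟨h₁, h₂, h₃, h⟩ :=
    (exists_eq_median_leaf (T.median (T.leaf x) (T.leaf y) (T.leaf z))).choose_spec
  exact H.median_congr h₁ h₂ h₃ hx hy hz h

lemma AgreeOnQuartets.medianMap_leaf {x : α} (hx : x ∈ X) :
    medianMap T T' (T.leaf x) = T'.leaf x := by
  simpa only [median_self_left] using H.medianMap_median hx hx hx

lemma AgreeOnQuartets.medianMap_medianMap (v : T.V) : medianMap T' T (medianMap T T' v) = v := by
  obtain ⟨h₁, h₂, h₃, h⟩ := (exists_eq_median_leaf v).choose_spec
  exact (H.symm.medianMap_median h₁ h₂ h₃).trans h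

lemma AgreeOnQuartets.adj_medianMap_of_adj_leaf (hX : 3 ≤ X.card) (hp : p ∈ X) {w : T.V}
    (hadj : T.G.Adj (T.leaf p) w) : T'.G.Adj (T'.leaf p) (medianMap T T' w) := by
  have hw : T.IsInternal w := fun x hx hxw => not_adj_leaf_leaf hX hp hx (hxw ▸ hadj)
  obtain ⟨q, hq, r, hr, hqw, hrw, hqr⟩ := hw.exists_leaves_btw hadj.symm
  have hpq : p ≠ q := (hqw.symm.ne_of_isInternal hp hw)
  have hpr : p ≠ r := (hrw.symm.ne_of_isInternal hp hw)
  have hqr' : q ≠ r := hqr.ne_of_isInternal hq hw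
  have hmed : T.IsMedian w (T.leaf p) (T.leaf q) (T.leaf r) := ⟨hqw.symm, hrw.symm, hqr⟩
  rw [hmed.eq_median, H.medianMap_median hp hq hr]
  by_contra hnadj
  obtain ⟨s, hs, hsp, hsq, hsr, hres, -⟩ := exists_leaf_resolvesAs_of_not_adj hp hq hr hpq
    (btw_left _ _) (isInternal_median hp hq hr hpq hpr hqr' p hp) hnadj
  have hT := (H hp hs hq hr hsp.symm hpq hpr hsq hsr hqr').2 hres
  have hps : T.leaf p ≠ T.leaf s := leaf_ne_leaf hp hs hsp.symm
  have hstep : T.step (T.leaf p) (T.leaf s) = w := eq_of_adj_leaf hp (adj_step hps) hadj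
  exact resolvesAs_iff.1 hT w (hstep ▸ btw_step hps) hqr

lemma AgreeOnQuartets.adj_median_of_btw {v w : T.V} (hadj : T.G.Adj v w) (hp : p ∈ X)
    (hq : q ∈ X) (hc₁ : c₁ ∈ X) (hc₂ : c₂ ∈ X) (hpq : p ≠ q) (hpc₁ : p ≠ c₁)
    (hqc₁ : q ≠ c₁) (hpc₂ : p ≠ c₂) (hqc₂ : q ≠ c₂)
    (hpv : T.Btw (T.leaf p) v w) (hqw : T.Btw v w (T.leaf q))
    (hpvc₁ : T.Btw (T.leaf p) v (T.leaf c₁)) (hqwc₂ : T.Btw (T.leaf q) w (T.leaf c₂))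
    (hne : T'.median (T'.leaf p) (T'.leaf q) (T'.leaf c₁) ≠
      T'.median (T'.leaf p) (T'.leaf q) (T'.leaf c₂))
    (hbtw : T'.Btw (T'.leaf p) (T'.median (T'.leaf p) (T'.leaf q) (T'.leaf c₁))
      (T'.median (T'.leaf p) (T'.leaf q) (T'.leaf c₂))) :
    T'.G.Adj (T'.median (T'.leaf p) (T'.leaf q) (T'.leaf c₁))
      (T'.median (T'.leaf p) (T'.leaf q) (T'.leaf c₂)) := by
  by_contra hnadj
  obtain ⟨s, hs, hsp, hsq, hsc₂, hres₂, hne₁, hbtw₁⟩ :=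
    exists_leaf_resolvesAs_of_not_adj hp hq hc₂ hpq hbtw hne hnadj
  have hsc₁ : s ≠ c₁ := by rintro rfl; exact hne₁ rfl
  have hres₁ := resolvesAs_of_btw_median hp hq hc₁ hs hpq hpc₁ hqc₁ hne₁.symm hbtw₁
  have hT₁ := (H hp hc₁ hq hs hpc₁ hpq hsp.symm hqc₁.symm hsc₁.symm hsq.symm).2 hres₁
  have hT₂ := (H hp hs hq hc₂ hsp.symm hpq hpc₂ hsq hsc₂ hqc₂).2 hres₂
  exact hT₁.not_resolvesAs_of_adj hadj hpv hqw hpvc₁ hqwc₂ hT₂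

lemma AgreeOnQuartets.adj_medianMap_of_isInternal {v w : T.V} (hv : T.IsInternal v)
    (hw : T.IsInternal w) (hadj : T.G.Adj v w) :
    T'.G.Adj (medianMap T T' v) (medianMap T T' w) := by
  obtain ⟨x₁, h₁, x₂, h₂, h1v, h2v, h12⟩ := hv.exists_leaves_btw hadj
  obtain ⟨x₃, h₃, x₄, h₄, h3w, h4w, h34⟩ := hw.exists_leaves_btw hadj.symm
  have h13v := h1v.concat_left h3w.symm hadj.ne
  have h14v := h1v.concat_left h4w.symm hadj.ne
  have h23v := h2v.concat_left h3w.symm hadj.ne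
  have h23w := h2v.concat h3w.symm hadj.ne
  have hv' : T.IsMedian v (T.leaf x₁) (T.leaf x₃) (T.leaf x₂) := ⟨h13v, h12, h23v.symm⟩
  have hw' : T.IsMedian w (T.leaf x₁) (T.leaf x₃) (T.leaf x₄) :=
    ⟨h1v.concat h3w.symm hadj.ne, h1v.concat h4w.symm hadj.ne, h34⟩
  have hφv : medianMap T T' v = T'.median (T'.leaf x₁) (T'.leaf x₃) (T'.leaf x₂) := by
    rw [hv'.eq_median, H.medianMap_median h₁ h₃ h₂]
  have hφw : medianMap T T' w = T'.median (T'.leaf x₁) (T'.leaf x₃) (T'.leaf x₄) := by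
    rw [hw'.eq_median, H.medianMap_median h₁ h₃ h₄]
  have hne : T'.median (T'.leaf x₁) (T'.leaf x₃) (T'.leaf x₂) ≠
      T'.median (T'.leaf x₁) (T'.leaf x₃) (T'.leaf x₄) := fun h => hadj.ne (by
    rw [← H.medianMap_medianMap v, ← H.medianMap_medianMap w, hφv, hφw, h])
  have h13 := h13v.ne_of_isInternal h₁ hv
  have h12' := h12.ne_of_isInternal h₁ hv
  have h14 := h14v.ne_of_isInternal h₁ hv
  have h32 := h23v.symm.ne_of_isInternal h₃ hv
  have h34' := h34.ne_of_isInternal h₃ hw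
  rw [hφv, hφw]
  rcases (isMedian_median (T'.leaf x₁) (T'.leaf x₃) (T'.leaf x₂)).1.total
    (isMedian_median (T'.leaf x₁) (T'.leaf x₃) (T'.leaf x₄)).1 with h | h
  · exact H.adj_median_of_btw hadj h₁ h₃ h₂ h₄ h13 h12' h32 h14 h34' h1v h3w.symm h12 h34
      hne h
  · exact (H.adj_median_of_btw hadj h₁ h₃ h₄ h₂ h13 h14 h34' h12' h32 h1v h3w.symm h14v
      h23w.symm hne.symm h).symm

lemma AgreeOnQuartets.adj_medianMap (hX : 3 ≤ X.card) {v w : T.V} (hadj : T.G.Adj v w) :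
    T'.G.Adj (medianMap T T' v) (medianMap T T' w) := by
  by_cases hv : ∃ x ∈ X, T.leaf x = v
  · obtain ⟨x, hx, rfl⟩ := hv
    rw [H.medianMap_leaf hx]
    exact H.adj_medianMap_of_adj_leaf hX hx hadj
  by_cases hw : ∃ x ∈ X, T.leaf x = w
  · obtain ⟨x, hx, rfl⟩ := hw
    rw [H.medianMap_leaf hx]
    exact (H.adj_medianMap_of_adj_leaf hX hx hadj.symm).symm
  push Not at hv hw
  exact H.adj_medianMap_of_isInternal hv hw hadj

lemma AgreeOnQuartets.labelIso (hX : 3 ≤ X.card) : LabelIso T T' :=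
  ⟨{ toFun := medianMap T T'
     invFun := medianMap T' T
     left_inv := H.medianMap_medianMap
     right_inv := H.symm.medianMap_medianMap
     map_rel_iff' := fun {v w} => ⟨fun h => by
        simpa only [H.medianMap_medianMap] using
          H.symm.adj_medianMap hX (v := medianMap T T' v) (w := medianMap T T' w) h,
       H.adj_medianMap hX⟩ },
    fun _ hx => H.medianMap_leaf hx⟩

end LabelIso

end PhyloTree

theorem decisive_of_all_quartets_through_x0_general {α : Type} [DecidableEq α]
    (X : Finset α) (hX : 4 ≤ X.card)
    (S : Set (Finset α))
    (x0 : α) (hx0 : x0 ∈ X)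
    (h : ∀ q : Finset α, q ⊆ X → q.card = 4 → x0 ∈ q → q ∈ QSet S) :
    PhyloDecisive X S := by
  intro T T' hres
  refine (PhyloTree.agreeOnQuartets_of_agree_through hx0
    fun a b c d ha hb hc hd hab hac had hbc hbd hcd hx => ?_).labelIso (by omega)
  have hq : ({a, b, c, d} : Finset α) ∈ QSet S := by
    refine h _ (by simp [Finset.insert_subset_iff, *]) ?_ ?_
    · simp [Finset.card_insert_of_notMem, *]
    · rcases hx with rfl | rfl | rfl | rfl <;> simp
  exact hres _ hq a b c d rfl

/-- if every 4-element subset of `X` containing some fixed `x0 ∈ X` lies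
in `Q_S`, then `S` is phylogenetically decisive for `X`. -/
theorem decisive_of_all_quartets_through_x0 {α : Type} [DecidableEq α]
    (X : Finset α) (hX : 4 ≤ X.card)
    (S : Set (Finset α)) (hS : ∀ Y ∈ S, Y ⊆ X)
    (x0 : α) (hx0 : x0 ∈ X)
    (h : ∀ q : Finset α, q ⊆ X → q.card = 4 → x0 ∈ q → q ∈ QSet S) :
    PhyloDecisive X S :=
  decisive_of_all_quartets_through_x0_general X hX S x0 hx0 h
end

section
/- Let Y1 and Y2 be finite sets with |Y1 ∩ Y2| ≥ 2, such that Y1 − Y2 and Y2 − Y1 are both nonempty, and let X = Y1 ∪ Y2. Then the collection S = {Y1, Y2} is not phylogenetically decisive for X. -/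
/-!
Pick `a, b ∈ Y1 ∩ Y2`, `x ∈ Y1 \ Y2`, `y ∈ Y2 \ Y1` and compare the caterpillars with leaf
orders `a x y b r₁ … rₖ` and `a y x b r₁ … rₖ`. A caterpillar resolves `ab|cd` exactly when
`{a, b}` and `{c, d}` occupy disjoint intervals of its leaf order. Each of `Y1`, `Y2` misses one
of `x`, `y`, so the two orders agree on `Y1` and on `Y2` and the trees resolve every quartet of
`Q_S` identically; yet the first tree resolves `ax|yb` and the second does not, so they are not
label-isomorphic.
-/

namespace SimpleGraph

variable {V : Type*} {G : SimpleGraph V}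

theorem connected_of_exists_adj_lt (r : V → ℕ) (root : V)
    (h : ∀ v, v ≠ root → ∃ w, G.Adj v w ∧ r w < r v) : G.Connected := by
  have reach : ∀ v, G.Reachable root v := by
    intro v
    induction hv : r v using Nat.strong_induction_on generalizing v with
    | _ n ih =>
      by_cases hroot : v = root
      · exact hroot ▸ Reachable.refl _
      obtain ⟨w, hvw, hw⟩ := h v hroot
      exact (ih _ (hv ▸ hw) w rfl).trans hvw.symm.reachable
  exact (connected_iff _).2 ⟨fun u v => (reach u).symm.trans (reach v), ⟨root⟩⟩

/-- At a vertex of maximal rank on a cycle, both neighbours along the cycle have lower rank. -/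
theorem isAcyclic_of_adj_lt_unique (r : V → ℕ) (hne : ∀ ⦃u v⦄, G.Adj u v → r u ≠ r v)
    (huniq : ∀ ⦃u v w⦄, G.Adj u v → G.Adj u w → r v < r u → r w < r u → v = w) :
    G.IsAcyclic := by
  classical
  intro v c hc
  obtain ⟨u, hu, hmax⟩ := c.support.toFinset.exists_max_image r ⟨v, by simp⟩
  rw [List.mem_toFinset] at hu
  set c' := c.rotate u hu
  have hc' : c'.IsCycle := hc.rotate hu
  have lt_of_adj : ∀ ⦃w⦄, G.Adj u w → w ∈ c'.support → r w < r u := fun w huw hw =>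
    lt_of_le_of_ne (hmax w (by simpa [c'] using hw)) (hne huw).symm
  have h₁ : G.Adj u c'.snd := c'.adj_snd hc'.not_nil
  have h₂ : G.Adj u c'.penultimate := (c'.adj_penultimate hc'.not_nil).symm
  exact hc'.snd_ne_penultimate <| huniq h₁ h₂ (lt_of_adj h₁ (c'.getVert_mem_support _))
    (lt_of_adj h₂ (c'.getVert_mem_support _))

theorem exists_walk_support_subset_of_adj_succ (f : ℕ → V) {a b : ℕ} (hab : a ≤ b)
    (hf : ∀ t, a ≤ t → t < b → G.Adj (f t) (f (t + 1))) :
    ∃ p : G.Walk (f a) (f b), ∀ v ∈ p.support, ∃ t, a ≤ t ∧ t ≤ b ∧ f t = v := by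
  induction b, hab using Nat.le_induction with
  | base => exact ⟨.nil, by simpa using ⟨a, le_rfl, le_rfl, rfl⟩⟩
  | succ b hab ih =>
    obtain ⟨p, hp⟩ := ih fun t h₁ h₂ => hf t h₁ (by omega)
    refine ⟨p.concat (hf b hab (by omega)), fun v hv => ?_⟩
    rw [Walk.support_concat, List.mem_append, List.mem_singleton] at hv
    rcases hv with hv | rfl
    · obtain ⟨t, h₁, h₂, rfl⟩ := hp v hv
      exact ⟨t, h₁, by omega, rfl⟩
    · exact ⟨b + 1, by omega, le_rfl, rfl⟩

end SimpleGraph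

namespace List

variable {α : Type*} [DecidableEq α]

theorem idxOf_lt_idxOf_filter_iff (l : List α) (p : α → Bool) {u v : α} (hu : p u) (hv : p v) :
    (l.filter p).idxOf u < (l.filter p).idxOf v ↔ l.idxOf u < l.idxOf v := by
  induction l with
  | nil => simp
  | cons x l ih =>
    by_cases hx : p x
    · simp only [filter_cons, hx, if_true]
      by_cases hxu : x = u
      · subst hxu
        by_cases hxv : x = v
        · simp [hxv]
        · simp [idxOf_cons_ne _ hxv]
      · by_cases hxv : x = v
        · subst hxv
          simp [idxOf_cons_ne _ hxu]
        · simp [idxOf_cons_ne _ hxu, idxOf_cons_ne _ hxv, ih]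
    · have hxu : x ≠ u := by rintro rfl; exact hx hu
      have hxv : x ≠ v := by rintro rfl; exact hx hv
      simp [hx, idxOf_cons_ne _ hxu, idxOf_cons_ne _ hxv, ih]

theorem idxOf_lt_idxOf_iff_of_filter_eq {l₁ l₂ : List α} {p : α → Bool}
    (h : l₁.filter p = l₂.filter p) {u v : α} (hu : p u) (hv : p v) :
    l₁.idxOf u < l₁.idxOf v ↔ l₂.idxOf u < l₂.idxOf v := by
  rw [← l₁.idxOf_lt_idxOf_filter_iff p hu hv, h, l₂.idxOf_lt_idxOf_filter_iff p hu hv]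

theorem nodup_of_card_eq_four {a b c d : α} (h : ({a, b, c, d} : Finset α).card = 4) :
    [a, b, c, d].Nodup := by
  have : [a, b, c, d].toFinset.card = [a, b, c, d].length := by simpa using h
  exact Multiset.toFinset_card_eq_card_iff_nodup.1 this

end List

def IsSeparated {ι : Type*} (f : ι → ℕ) (a b c d : ι) : Prop :=
  max (f a) (f b) < min (f c) (f d) ∨ max (f c) (f d) < min (f a) (f b)

theorem isSeparated_congr {ι : Type*} {f g : ι → ℕ} {s : Set ι}
    (h : ∀ u ∈ s, ∀ v ∈ s, f u < f v ↔ g u < g v) {a b c d : ι} (ha : a ∈ s) (hb : b ∈ s)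
    (hc : c ∈ s) (hd : d ∈ s) : IsSeparated f a b c d ↔ IsSeparated g a b c d := by
  simp only [IsSeparated, max_lt_iff, lt_min_iff, h a ha c hc, h a ha d hd, h b hb c hc,
    h b hb d hd, h c hc a ha, h c hc b hb, h d hd a ha, h d hd b hb]

/-- Leaf `i` hangs off spine vertex `min (i - 1) (m + 1)`, so leaves `0, 1` and `m + 2, m + 3`
are the cherries at the two ends of the spine `0, …, m + 1`. -/
def caterpillar.spineOf (m i : ℕ) : ℕ := min (i - 1) (m + 1)

def caterpillar (m : ℕ) : SimpleGraph (Fin (m + 4) ⊕ Fin (m + 2)) where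
  Adj
    | .inl i, .inr j => (j : ℕ) = caterpillar.spineOf m i
    | .inr j, .inl i => (j : ℕ) = caterpillar.spineOf m i
    | .inr j, .inr k => (j : ℕ) + 1 = k ∨ (k : ℕ) + 1 = j
    | .inl _, .inl _ => False
  symm := ⟨by rintro (i | j) (i' | j') h <;> first | exact h | exact h.symm⟩
  loopless := ⟨by rintro (i | j) h <;> simp_all⟩

namespace caterpillar

variable {m : ℕ}

@[simp] theorem not_adj_inl_inl {i i' : Fin (m + 4)} : ¬ (caterpillar m).Adj (.inl i) (.inl i') :=
  id

@[simp] theorem adj_inl_inr {i : Fin (m + 4)} {j : Fin (m + 2)} :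
    (caterpillar m).Adj (.inl i) (.inr j) ↔ (j : ℕ) = spineOf m i := Iff.rfl

@[simp] theorem adj_inr_inl {i : Fin (m + 4)} {j : Fin (m + 2)} :
    (caterpillar m).Adj (.inr j) (.inl i) ↔ (j : ℕ) = spineOf m i := Iff.rfl

@[simp] theorem adj_inr_inr {j k : Fin (m + 2)} :
    (caterpillar m).Adj (.inr j) (.inr k) ↔ (j : ℕ) + 1 = k ∨ (k : ℕ) + 1 = j := Iff.rfl

theorem spineOf_lt (i : ℕ) : spineOf m i < m + 2 := by unfold spineOf; omega

theorem spineOf_mono : Monotone (spineOf m) := fun _ _ h => by unfold spineOf; omega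

theorem spineOf_lt_spineOf_iff {x y : ℕ} (hx : 1 ≤ x) (hy : y ≤ m + 2) :
    spineOf m x < spineOf m y ↔ x < y := by
  unfold spineOf; omega

def spine (i : Fin (m + 4)) : Fin (m + 2) := ⟨spineOf m i, spineOf_lt i⟩

theorem neighborSet_inl (i : Fin (m + 4)) :
    (caterpillar m).neighborSet (.inl i) = {.inr (spine i)} := by
  ext (i' | j) <;> simp [spine, Fin.ext_iff]

theorem ncard_neighborSet_inl (i : Fin (m + 4)) :
    ((caterpillar m).neighborSet (.inl i)).ncard = 1 := by
  simp [neighborSet_inl]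

theorem ncard_neighborSet_inr (j : Fin (m + 2)) :
    ((caterpillar m).neighborSet (.inr j)).ncard = 3 := by
  rw [Set.ncard_eq_three]
  obtain ⟨j, hj⟩ := j
  rcases (show j = 0 ∨ j = m + 1 ∨ 0 < j ∧ j < m + 1 by omega) with rfl | rfl | ⟨h₀, h₁⟩ <;> [
    refine ⟨.inl ⟨0, by omega⟩, .inl ⟨1, by omega⟩, .inr ⟨1, by omega⟩, ?_⟩;
    refine ⟨.inl ⟨m + 2, by omega⟩, .inl ⟨m + 3, by omega⟩, .inr ⟨m, by omega⟩, ?_⟩;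
    refine ⟨.inl ⟨j + 1, by omega⟩, .inr ⟨j - 1, by omega⟩, .inr ⟨j + 1, by omega⟩, ?_⟩] <;>
  refine ⟨by simp, by simp, by simp, Set.ext ?_⟩ <;>
  rintro (i | k) <;>
  simp only [SimpleGraph.mem_neighborSet, adj_inr_inl, adj_inr_inr, Set.mem_insert_iff,
    Set.mem_singleton_iff, Sum.inl.injEq, Sum.inr.injEq, reduceCtorEq, Fin.ext_iff, spineOf,
    or_false, false_or] <;>
  omega

def rank : Fin (m + 4) ⊕ Fin (m + 2) → ℕ := Sum.elim (fun _ => m + 2) Fin.val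

theorem connected : (caterpillar m).Connected := by
  refine SimpleGraph.connected_of_exists_adj_lt rank (.inr 0) ?_
  rintro (i | ⟨_ | j, hj⟩) hv
  · exact ⟨.inr (spine i), rfl, (spine i).isLt⟩
  · exact absurd rfl hv
  · exact ⟨.inr ⟨j, by omega⟩, by simp, by simp [rank]⟩

theorem isAcyclic : (caterpillar m).IsAcyclic := by
  refine SimpleGraph.isAcyclic_of_adj_lt_unique rank ?_ ?_
  · rintro (i | j) (i' | j') h <;> simp_all [rank] <;> omega
  · rintro (i | j) (i' | j') (i'' | j'') h h' <;> simp_all [rank, Fin.ext_iff, spineOf]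
    omega

def level : Fin (m + 4) ⊕ Fin (m + 2) → ℕ := Sum.elim (fun i => spineOf m i) Fin.val

theorem eq_inr_of_adj_of_level_lt {u v : Fin (m + 4) ⊕ Fin (m + 2)} {t : Fin (m + 2)}
    (h : (caterpillar m).Adj u v) (hu : level u < t) (hv : t ≤ level v) : v = .inr t := by
  rcases u with i | j <;> rcases v with i' | j' <;> simp_all [level, Fin.ext_iff] <;> omega

theorem inr_mem_support {i j : Fin (m + 4)} (hij : i ≠ j)
    (p : (caterpillar m).Walk (.inl i) (.inl j)) {t : Fin (m + 2)}
    (h₁ : min (spineOf m i) (spineOf m j) ≤ t) (h₂ : t ≤ max (spineOf m i) (spineOf m j)) :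
    .inr t ∈ p.support := by
  wlog h : spineOf m i ≤ spineOf m j generalizing i j
  · simpa using this hij.symm p.reverse (by omega) (by omega) (by omega)
  obtain ⟨d, hd, hfst, hsnd⟩ := p.exists_boundary_dart {v | v = .inl i ∨ level v < t}
    (Or.inl rfl) (by simp [level, hij.symm]; omega)
  suffices d.snd = .inr t from this ▸ p.dart_snd_mem_support_of_mem_darts hd
  simp only [Set.mem_ofPred_eq, not_or] at hfst hsnd
  rcases hfst with hfst | hfst
  · have hleaf : d.snd = .inr (spine i) := by
      simpa [← SimpleGraph.mem_neighborSet, neighborSet_inl, hfst] using d.adj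
    simp only [hleaf, level, spine, Sum.elim_inr] at hsnd ⊢
    exact congrArg _ (Fin.ext (by simp only; omega))
  · exact eq_inr_of_adj_of_level_lt d.adj hfst (by omega)

theorem exists_walk_inl (i j : Fin (m + 4)) :
    ∃ p : (caterpillar m).Walk (.inl i) (.inl j), ∀ v ∈ p.support, v = .inl i ∨ v = .inl j ∨
      ∃ t : Fin (m + 2), v = .inr t ∧ min (spineOf m i) (spineOf m j) ≤ t ∧
        t ≤ max (spineOf m i) (spineOf m j) := by
  wlog h : spineOf m i ≤ spineOf m j generalizing i j
  · obtain ⟨p, hp⟩ := this j i (by omega)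
    refine ⟨p.reverse, fun v hv => ?_⟩
    rw [SimpleGraph.Walk.support_reverse, List.mem_reverse] at hv
    have := hp v hv
    rw [min_comm, max_comm]
    tauto
  let f (s : ℕ) : Fin (m + 4) ⊕ Fin (m + 2) := .inr ⟨min s (m + 1), by omega⟩
  have hi : (caterpillar m).Adj (.inl i) (f (spineOf m i)) := by simp [f, spineOf]
  have hj : (caterpillar m).Adj (f (spineOf m j)) (.inl j) := by simp [f, spineOf]
  have := spineOf_lt (m := m) j
  obtain ⟨p, hp⟩ := SimpleGraph.exists_walk_support_subset_of_adj_succ (G := caterpillar m) f h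
    fun s _ hs => by simp only [f, adj_inr_inr]; omega
  refine ⟨.cons hi (p.concat hj), fun v hv => ?_⟩
  simp only [SimpleGraph.Walk.support_cons, SimpleGraph.Walk.support_concat, List.mem_cons,
    List.mem_append, List.not_mem_nil, or_false] at hv
  rcases hv with rfl | hv | rfl
  · exact Or.inl rfl
  · obtain ⟨s, hs₁, hs₂, rfl⟩ := hp v hv
    exact Or.inr (Or.inr ⟨_, rfl, by simp; omega, by simp; omega⟩)
  · exact Or.inr (Or.inl rfl)

theorem isSeparated_spineOf_iff {i j k l : Fin (m + 4)} (hij : i ≠ j) (hkl : k ≠ l) :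
    IsSeparated (fun i : Fin (m + 4) => spineOf m i) i j k l ↔ IsSeparated Fin.val i j k l := by
  rw [Ne, Fin.ext_iff] at hij hkl
  simp only [IsSeparated, ← spineOf_mono.map_max, ← spineOf_mono.map_min]
  rw [spineOf_lt_spineOf_iff (by omega) (by omega), spineOf_lt_spineOf_iff (by omega) (by omega)]

theorem exists_disjoint_paths_iff {i j k l : Fin (m + 4)} (hij : i ≠ j) (hik : i ≠ k)
    (hil : i ≠ l) (hjk : j ≠ k) (hjl : j ≠ l) (hkl : k ≠ l) :
    (∃ (p : (caterpillar m).Walk (.inl i) (.inl j)) (q : (caterpillar m).Walk (.inl k) (.inl l)),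
      p.IsPath ∧ q.IsPath ∧ ∀ v ∈ p.support, v ∉ q.support) ↔ IsSeparated Fin.val i j k l := by
  rw [← isSeparated_spineOf_iff hij hkl, IsSeparated]
  constructor
  · rintro ⟨p, q, -, -, hpq⟩
    by_contra hsep
    have := spineOf_lt (m := m) i
    have := spineOf_lt (m := m) k
    let t : Fin (m + 2) :=
      ⟨max (min (spineOf m i) (spineOf m j)) (min (spineOf m k) (spineOf m l)), by omega⟩
    refine hpq (.inr t) (inr_mem_support hij p ?_ ?_) (inr_mem_support hkl q ?_ ?_) <;>
      simp only [t] <;> omega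
  · intro hsep
    obtain ⟨p, hp⟩ := exists_walk_inl i j
    obtain ⟨q, hq⟩ := exists_walk_inl k l
    refine ⟨p.bypass, q.bypass, p.bypass_isPath, q.bypass_isPath, fun v hvp hvq => ?_⟩
    rcases hp v (p.support_bypass_subset_support hvp) with rfl | rfl | ⟨t, rfl, ht⟩ <;>
      rcases hq _ (q.support_bypass_subset_support hvq) with h | h | ⟨t', h, ht'⟩ <;>
      simp only [Sum.inl.injEq, Sum.inr.injEq, reduceCtorEq] at h
    all_goals subst h; omega

end caterpillar

section caterpillarTree

variable {α : Type} [DecidableEq α] {m : ℕ}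

/-- `L.idxOf x = L.length` when `x ∉ L`; the `min` only keeps that junk value in range. -/
def List.caterpillarPos (L : List α) (m : ℕ) (x : α) : Fin (m + 4) :=
  ⟨min (L.idxOf x) (m + 3), by omega⟩

theorem List.val_caterpillarPos {L : List α} (hlen : L.length = m + 4) {x : α} (hx : x ∈ L) :
    (L.caterpillarPos m x : ℕ) = L.idxOf x := by
  have := List.idxOf_lt_length_iff.2 hx
  simp only [List.caterpillarPos]
  omega

theorem List.exists_caterpillarPos_eq {L : List α} (hlen : L.length = m + 4) (hnd : L.Nodup)
    (i : Fin (m + 4)) : ∃ x ∈ L, L.caterpillarPos m x = i := by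
  refine ⟨L[i.val], List.getElem_mem _, Fin.ext ?_⟩
  rw [L.val_caterpillarPos hlen (List.getElem_mem _), hnd.idxOf_getElem]

def caterpillarTree (L : List α) (X : Finset α) (hlen : L.length = m + 4)
    (hX : ∀ x, x ∈ L ↔ x ∈ X) (hnd : L.Nodup) : PhyloTree X where
  V := Fin (m + 4) ⊕ Fin (m + 2)
  fintypeV := inferInstance
  G := caterpillar m
  connected := caterpillar.connected
  acyclic := caterpillar.isAcyclic
  leaf x := .inl (L.caterpillarPos m x)
  leaf_inj x hx y hy h := by
    rw [Sum.inl.injEq, Fin.ext_iff, List.val_caterpillarPos hlen ((hX x).2 hx),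
      List.val_caterpillarPos hlen ((hX y).2 hy)] at h
    exact (List.idxOf_inj ((hX x).2 hx)).1 h
  leaf_degree _ _ := caterpillar.ncard_neighborSet_inl _
  degree_one_is_leaf := by
    rintro (i | j) h
    · obtain ⟨x, hx, rfl⟩ := List.exists_caterpillarPos_eq hlen hnd i
      exact ⟨x, (hX x).1 hx, rfl⟩
    · simp [caterpillar.ncard_neighborSet_inr] at h
  internal_degree := by
    rintro (i | j) h
    · obtain ⟨x, hx, rfl⟩ := List.exists_caterpillarPos_eq hlen hnd i
      exact absurd rfl (h x ((hX x).1 hx))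
    · exact caterpillar.ncard_neighborSet_inr j

theorem caterpillarTree_resolvesAs_iff {L : List α} {X : Finset α} (hlen : L.length = m + 4)
    (hX : ∀ x, x ∈ L ↔ x ∈ X) (hnd : L.Nodup) {a b c d : α} (hL : [a, b, c, d] ⊆ L)
    (habcd : [a, b, c, d].Nodup) :
    (caterpillarTree L X hlen hX hnd).ResolvesAs a b c d ↔ IsSeparated L.idxOf a b c d := by
  simp only [List.cons_subset, List.nil_subset, and_true] at hL
  obtain ⟨ha, hb, hc, hd⟩ := hL
  simp only [List.nodup_cons, List.mem_cons, List.not_mem_nil, or_false, not_or] at habcd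
  obtain ⟨⟨hab, hac, had⟩, ⟨hbc, hbd⟩, hcd, -⟩ := habcd
  have hpos : ∀ {x y}, x ∈ L → y ∈ L → x ≠ y → L.caterpillarPos m x ≠ L.caterpillarPos m y :=
    fun hx hy hxy h => hxy <| (List.idxOf_inj hx).1 <| by
      rw [← List.val_caterpillarPos hlen hx, ← List.val_caterpillarPos hlen hy, h]
  refine (caterpillar.exists_disjoint_paths_iff (hpos ha hb hab) (hpos ha hc hac) (hpos ha hd had)
    (hpos hb hc hbc) (hpos hb hd hbd) (hpos hc hd hcd)).trans ?_
  simp only [IsSeparated, List.val_caterpillarPos hlen ha, List.val_caterpillarPos hlen hb,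
    List.val_caterpillarPos hlen hc, List.val_caterpillarPos hlen hd]

end caterpillarTree

theorem PhyloTree.LabelIso.resolvesAs {α : Type} {X : Finset α} {T T' : PhyloTree X}
    (h : T.LabelIso T') {a b c d : α} (ha : a ∈ X) (hb : b ∈ X) (hc : c ∈ X) (hd : d ∈ X)
    (hres : T.ResolvesAs a b c d) : T'.ResolvesAs a b c d := by
  obtain ⟨φ, hφ⟩ := h
  obtain ⟨p, q, hp, hq, hpq⟩ := hres
  refine ⟨(p.map φ.toHom).copy (hφ a ha) (hφ b hb), (q.map φ.toHom).copy (hφ c hc) (hφ d hd),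
    by simpa using hp.map φ.injective, by simpa using hq.map φ.injective, ?_⟩
  simp only [SimpleGraph.Walk.support_copy, SimpleGraph.Walk.support_map, List.mem_map]
  rintro _ ⟨v, hv, rfl⟩ ⟨w, hw, hvw⟩
  exact hpq v hv (φ.injective hvw ▸ hw)
theorem PhyloTree.exists_resolvesAs_swap {α : Type} [DecidableEq α] {X : Finset α} {a x y b : α}
    (ha : a ∈ X) (hx : x ∈ X) (hy : y ∈ X) (hb : b ∈ X) (hnd : [a, x, y, b].Nodup) :
    ∃ T₁ T₂ : PhyloTree X, T₁.ResolvesAs a x y b ∧ ¬ T₂.ResolvesAs a x y b ∧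
      ∀ Y ⊆ X, (x ∉ Y ∨ y ∉ Y) → ∀ q ⊆ Y, q.card = 4 → T₁.ResolveIdentically T₂ q := by
  set R := (X \ {a, x, y, b}).toList
  set L₁ := a :: x :: y :: b :: R
  set L₂ := a :: y :: x :: b :: R
  have hperm : L₂.Perm L₁ := (List.Perm.swap x y (b :: R)).cons a
  have hX₁ : ∀ z, z ∈ L₁ ↔ z ∈ X := fun z => by
    by_cases hz : z = a ∨ z = x ∨ z = y ∨ z = b
    · rcases hz with rfl | rfl | rfl | rfl <;> simpa [L₁]
    · simp_all [L₁, R]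
  have hnd₁ : L₁.Nodup := by
    rw [show L₁ = [a, x, y, b] ++ R from rfl, List.nodup_append]
    exact ⟨hnd, Finset.nodup_toList _, fun u hu v hv huv => by simp_all [R]⟩
  have hX₂ : ∀ z, z ∈ L₂ ↔ z ∈ X := fun z => hperm.mem_iff.trans (hX₁ z)
  have hnd₂ : L₂.Nodup := hperm.nodup_iff.2 hnd₁
  obtain ⟨⟨hax, hay, hab⟩, ⟨hxy, hxb⟩, hyb, -⟩ := by
    simpa only [List.nodup_cons, List.mem_cons, List.not_mem_nil, or_false, not_or] using hnd
  refine ⟨caterpillarTree L₁ X rfl hX₁ hnd₁, caterpillarTree L₂ X rfl hX₂ hnd₂, ?_, ?_, ?_⟩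
  · rw [caterpillarTree_resolvesAs_iff _ _ _ (by simp [L₁]) hnd]
    simp [IsSeparated, L₁, List.idxOf_cons_ne, hax, hay, hab, hxy, hxb, hyb]
  · rw [caterpillarTree_resolvesAs_iff _ _ _ (by simp [L₂]) hnd]
    simp [IsSeparated, L₂, List.idxOf_cons_ne, hax, hay, hab, hxb, hyb, Ne.symm hxy]
  · intro Y hYX hY q hqY hq a' b' c' d' hq'
    subst hq'
    have hmem : ∀ z ∈ [a', b', c', d'], z ∈ Y := fun z hz => hqY (by simpa using hz)
    have hsub : ∀ L : List α, (∀ z, z ∈ L ↔ z ∈ X) → [a', b', c', d'] ⊆ L := fun L hL z hz =>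
      (hL z).2 (hYX (hmem z hz))
    have habcd := List.nodup_of_card_eq_four hq
    rw [caterpillarTree_resolvesAs_iff _ _ _ (hsub L₁ hX₁) habcd,
      caterpillarTree_resolvesAs_iff _ _ _ (hsub L₂ hX₂) habcd]
    have hfilter : L₁.filter (· ∈ Y) = L₂.filter (· ∈ Y) := by
      rcases hY with h | h <;> simp [L₁, L₂, List.filter_cons, h]
    exact isSeparated_congr (s := ↑Y) (fun u hu v hv => List.idxOf_lt_idxOf_iff_of_filter_eq hfilter
      (by simpa using hu) (by simpa using hv)) (hmem _ (by simp)) (hmem _ (by simp))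
      (hmem _ (by simp)) (hmem _ (by simp))

/-- if `Y1 − Y2` and `Y2 − Y1` are nonempty and `|Y1 ∩ Y2| ≥ 2`, then
`{Y1, Y2}` is not phylogenetically decisive for `X = Y1 ∪ Y2`. -/
theorem not_decisive_pair {α : Type} [DecidableEq α]
    (Y1 Y2 : Finset α)
    (hk : 2 ≤ (Y1 ∩ Y2).card)
    (h1 : (Y1 \ Y2).Nonempty) (h2 : (Y2 \ Y1).Nonempty) :
    ¬ PhyloDecisive (Y1 ∪ Y2) ({Y1, Y2} : Set (Finset α)) := by
  obtain ⟨a, ha, b, hb, hab⟩ := Finset.one_lt_card.1 hk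
  obtain ⟨x, hx⟩ := h1
  obtain ⟨y, hy⟩ := h2
  simp only [Finset.mem_inter, Finset.mem_sdiff] at ha hb hx hy
  have haX := Finset.mem_union_left Y2 ha.1
  have hxX := Finset.mem_union_left Y2 hx.1
  have hyX := Finset.mem_union_right Y1 hy.1
  have hbX := Finset.mem_union_left Y2 hb.1
  have hnd : [a, x, y, b].Nodup := by
    simp only [List.nodup_cons, List.mem_cons, List.not_mem_nil, or_false, not_or,
      not_false_eq_true, List.nodup_nil, and_true]
    refine ⟨⟨?_, ?_, hab⟩, ⟨?_, ?_⟩, ?_⟩ <;> rintro rfl <;> tauto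
  obtain ⟨T₁, T₂, hres₁, hres₂, hsame⟩ := PhyloTree.exists_resolvesAs_swap haX hxX hyX hbX hnd
  intro hdec
  have hiso : T₁.LabelIso T₂ := hdec T₁ T₂ fun q ⟨hcard, Y, hY, hqY⟩ => by
    rcases hY with rfl | rfl
    · exact hsame _ Finset.subset_union_left (Or.inr hy.2) q hqY hcard
    · exact hsame _ Finset.subset_union_right (Or.inl hx.2) q hqY hcard
  exact hres₂ (hiso.resolvesAs haX hxX hyX hbX hres₁)
end
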